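/- arXiv:2406.03970 — 7 statements merged into one kernel-verified Lean document; each statement's English description precedes it below -/
import Mathlib

section
/- Let (l,j) ∈ B with j < j_l. If u ∈ V satisfies u_{(l,j)} ≠ 0 and u_c = 0 for all c ∈ B with c < (l,j), then Ju ≠ 0, (Ju)_{(l,j+1)} ≠ 0, and (Ju)_c = 0 for all c < (l,j+1). Consequently, if L ∈ X and L_i ∈ C_{(l,j)} for some i ∈ ℤ/nℤ, then L_{i+1} = J(L_i) and L_{i+1} ∈ C_{(l,j+1)}. -/
open LinearAlgebra.Projectivization Projectivization Filter Topology

noncomputable section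

/-- Topology on the projectivization: quotient topology. -/
instance {K V : Type*} [DivisionRing K] [AddCommGroup V] [Module K V] [TopologicalSpace V] :
    TopologicalSpace (ℙ K V) :=
  inferInstanceAs (TopologicalSpace (Quotient (projectivizationSetoid K V)))

variable {M : ℕ}

/-- The index set `B`: `⟨l, i⟩` encodes the basis vector `v_{i+1}^{l+1}` of the
`(l+1)`-st Jordan block (both indices are 0-based here, 1-based in the paper). -/
abbrev Idx (j : Fin M → ℕ) : Type := Σ l : Fin M, Fin (j l)

variable {j : Fin M → ℕ}

/-- `j_l − i` in the 1-based notation of the paper: the distance from the end of the block. -/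
def col (b : Idx j) : ℕ := j b.1 - 1 - b.2.val

/-- The twisted lexicographic order on `B`:
`b < c` iff `col c < col b`, or `col b = col c` and the block of `b` is earlier. -/
def blt (b c : Idx j) : Prop := col c < col b ∨ (col b = col c ∧ b.1 < c.1)

/-- `b ≤ c` for the twisted lexicographic order. -/
def ble (b c : Idx j) : Prop := blt b c ∨ b = c

/-- The underlying vector space `V = ℂ^B`. -/
abbrev Vsp (j : Fin M → ℕ) : Type := Idx j → ℂ

/-- The standard basis vector `e_b`. -/
def eVec (b : Idx j) : Vsp j := Pi.single b 1

lemma eVec_ne_zero (b : Idx j) : eVec b ≠ 0 := by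
  intro h
  have := congrFun h b
  simp [eVec] at this

/-- The nilpotent Jordan map `J` with `J e_{(l,i)} = e_{(l,i+1)}`. -/
def Jmap (j : Fin M → ℕ) : Vsp j →ₗ[ℂ] Vsp j where
  toFun u c :=
    if h : 0 < c.2.val then
      u ⟨c.1, ⟨c.2.val - 1, lt_of_le_of_lt (Nat.sub_le _ _) c.2.isLt⟩⟩ else 0
  map_add' u v := by funext c; by_cases h : 0 < c.2.val <;> simp [h]
  map_smul' a u := by funext c; by_cases h : 0 < c.2.val <;> simp [h]

/-- The quiver Grassmannian `X ⊆ ℙ(V)^{ℤ/nℤ}` of one-dimensional subrepresentations. -/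
def QG (n : ℕ) (j : Fin M → ℕ) : Set (ZMod n → ℙ ℂ (Vsp j)) :=
  {L | ∀ i : ZMod n, (L i).submodule.map (Jmap j) ≤ (L (i + 1)).submodule}

/-- `p` is a fixed point of `X` with index function `f`. -/
def IsFixedPt (n : ℕ) (L : ZMod n → ℙ ℂ (Vsp j)) (f : ZMod n → Idx j) : Prop :=
  L ∈ QG n j ∧ ∀ i, L i = mk ℂ (eVec (f i)) (eVec_ne_zero (f i))

/-- The cell `C_b ⊆ ℙ(V)`. -/
def Cb (b : Idx j) : Set (ℙ ℂ (Vsp j)) :=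
  {x | ∃ (u : Vsp j) (hu : u ≠ 0), x = mk ℂ u hu ∧ u b ≠ 0 ∧ ∀ c, blt c b → u c = 0}

/-- The closed cell `Z_b ⊆ ℙ(V)`. -/
def Zb (b : Idx j) : Set (ℙ ℂ (Vsp j)) :=
  {x | ∃ (u : Vsp j) (hu : u ≠ 0), x = mk ℂ u hu ∧ ∀ c, blt c b → u c = 0}

/-- The BB-cell of the fixed point with index function `f`. -/
def cell (n : ℕ) (f : ZMod n → Idx j) : Set (ZMod n → ℙ ℂ (Vsp j)) :=
  QG n j ∩ {L | ∀ i, L i ∈ Cb (f i)}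

/-- Rescaling of coordinates by units, as a linear map. -/
def scaleV (c : Idx j → ℂˣ) : Vsp j →ₗ[ℂ] Vsp j where
  toFun u b := c b * u b
  map_add' u v := by funext b; simp [mul_add]
  map_smul' a u := by funext b; simp [smul_eq_mul]; ring

lemma scaleV_injective (c : Idx j → ℂˣ) : Function.Injective (scaleV c) := by
  intro u v h
  funext b
  have hb : (c b : ℂ) * u b = (c b : ℂ) * v b := congrFun h b
  exact mul_left_cancel₀ (Units.ne_zero (c b)) hb

/-- The weight of the `ℂ^×`-action on the coordinate `b`: `l − M(j_l − i)`. -/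
def wt (M : ℕ) {j : Fin M → ℕ} (b : Idx j) : ℤ := (b.1.val + 1 : ℤ) - M * col b

/-- The `ℂ^×`-action on `ℙ(V)`: `λ • e_b = λ^{wt b} e_b`. -/
def actP (lam : ℂˣ) : ℙ ℂ (Vsp j) → ℙ ℂ (Vsp j) :=
  Projectivization.map (scaleV fun b => lam ^ wt M b) (scaleV_injective _)

/-- The punctured-neighborhood filter of `0` in `ℂ`, pulled back to `ℂˣ`. -/
def zeroF : Filter ℂˣ := comap Units.val (𝓝 (0 : ℂ))

end
theorem statement_1 (n M : ℕ) (hn : 1 ≤ n) (hM : 1 ≤ M) (j : Fin M → ℕ)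
    (hpart : Antitone j) (hj : ∀ l, 1 ≤ j l)
    (b : Idx j) (hb : b.2.val + 1 < j b.1) :
    (∀ u : Vsp j, u b ≠ 0 → (∀ c, blt c b → u c = 0) →
      Jmap j u ≠ 0 ∧ Jmap j u ⟨b.1, ⟨b.2.val + 1, hb⟩⟩ ≠ 0 ∧
        ∀ c, blt c ⟨b.1, ⟨b.2.val + 1, hb⟩⟩ → Jmap j u c = 0) ∧
    (∀ L ∈ QG n j, ∀ i : ZMod n, L i ∈ Cb b →
      (L (i + 1)).submodule = (L i).submodule.map (Jmap j) ∧
        L (i + 1) ∈ Cb ⟨b.1, ⟨b.2.val + 1, hb⟩⟩) := by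

  have part1 : ∀ u : Vsp j, u b ≠ 0 → (∀ c, blt c b → u c = 0) →
      Jmap j u ≠ 0 ∧ Jmap j u ⟨b.1, ⟨b.2.val + 1, hb⟩⟩ ≠ 0 ∧
        ∀ c, blt c ⟨b.1, ⟨b.2.val + 1, hb⟩⟩ → Jmap j u c = 0 := by
    intro u hub hvan
    have key : Jmap j u ⟨b.1, ⟨b.2.val + 1, hb⟩⟩ = u b := by
      simp only [Jmap, LinearMap.coe_mk, AddHom.coe_mk]
      rw [dif_pos (Nat.succ_pos _)]
      congr
    have hvan' : ∀ c, blt c ⟨b.1, ⟨b.2.val + 1, hb⟩⟩ → Jmap j u c = 0 := by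
      rintro ⟨c1, c2⟩ hc
      simp only [Jmap, LinearMap.coe_mk, AddHom.coe_mk]
      by_cases h0 : 0 < c2.val
      · rw [dif_pos h0]
        apply hvan
        simp only [blt, col] at hc ⊢
        have h1 : c2.val < j c1 := c2.isLt
        have h2 : b.2.val + 1 < j b.1 := hb
        rcases hc with h | ⟨h, hlt⟩
        · left; omega
        · right; exact ⟨by omega, hlt⟩
      · rw [dif_neg h0]
    refine ⟨fun h => hub ?_, key ▸ hub, hvan'⟩
    rw [← key, h]; rfl
  refine ⟨part1, ?_⟩
  intro L hL i hLi
  obtain ⟨u, hu, hmk, hub, hvan⟩ := hLi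
  obtain ⟨hne, hb', hvan'⟩ := part1 u hub hvan
  have hmap : (L i).submodule.map (Jmap j) = Submodule.span ℂ {Jmap j u} := by
    rw [hmk, submodule_mk, Submodule.map_span, Set.image_singleton]
  have hmem : Jmap j u ∈ (L (i+1)).submodule := by
    apply hL i
    rw [hmap]
    exact Submodule.mem_span_singleton_self _
  rw [← mk_rep (L (i+1)), submodule_mk, Submodule.mem_span_singleton] at hmem
  obtain ⟨a, ha⟩ := hmem
  have ha0 : a ≠ 0 := by
    rintro rfl
    rw [zero_smul] at ha
    exact hne ha.symm
  have hmk2 : L (i+1) = mk ℂ (Jmap j u) hne := by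
    rw [← mk_rep (L (i+1))]
    exact ((mk_eq_mk_iff ℂ _ _ hne (rep_nonzero _)).2 ⟨Units.mk0 a ha0, ha⟩).symm
  constructor
  · rw [hmap, hmk2, submodule_mk]
  · exact ⟨Jmap j u, hne, hmk2, hb', hvan'⟩
end

section
/- For every fixed point p of X, the BB-cell C_p equals the attracting set {L ∈ X : lim_{λ→0} λ•L = p} of p under the diagonal ℂ^×-action, and C_p (with the subspace topology) is homeomorphic to the affine space ℂ^{d(p)}. -/
open LinearAlgebra.Projectivization Projectivization Filter Topology

open Classical in
/-- `d(p)`: the sum over the starting vertices `i` of `p` (those with `J e_{f(i−1)} = 0`)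
of the number of basis elements strictly above `f i`. -/
noncomputable def dDim {M : ℕ} {j : Fin M → ℕ} (n : ℕ) [NeZero n] (f : ZMod n → Idx j) : ℕ :=
  ∑ i : ZMod n,
    if Jmap j (eVec (f (i - 1))) = 0 then Nat.card {b : Idx j // blt (f i) b} else 0

/-!
Since `1 ≤ l + 1 ≤ M`, the weight `wt b = (l + 1) - M (j_l - i)` orders `B` exactly as the
twisted order does. Hence `λ • [u] = [∑ λ ^ (wt c - wt b) u_c e_c]` tends to `[e_b]` as
`λ → 0` iff `b` is the least index in the support of `u`, i.e. iff `[u] ∈ C_b`; applied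
vertexwise this identifies the BB-cell with the attracting set.

Along the cycle, the index function of a fixed point runs down a Jordan string from each
starting vertex to the next. A point `L` of the cell is determined by its lines at the starting
vertices: if `s` is the latest starting vertex before `i`, at distance `k`, then `L_i = J^k L_s`.
Conversely any choice of lines `[u_s] ∈ C_{f s}` extends this way to a point of the cell, as `J`
kills `C_{f (s - 1)}` (where `col = 0`). Normalising `u_s (f s) = 1`, the coordinates `u_s c` with
`c > f s` are free, and there are `d(p)` of them.
-/

section ProjectiveTopology

variable {K V : Type*} [DivisionRing K] [AddCommGroup V] [Module K V]

lemma Projectivization.mk_eq_of_mem_submodule {x : ℙ K V} {v : V} (hv : v ∈ x.submodule)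
    (hv0 : v ≠ 0) : mk K v hv0 = x := by
  rw [submodule_eq, Submodule.mem_span_singleton] at hv
  obtain ⟨a, rfl⟩ := hv
  conv_rhs => rw [← x.mk_rep]
  exact (mk_eq_mk_iff' K _ _ hv0 x.rep_nonzero).2 ⟨a, rfl⟩

variable [TopologicalSpace V]

lemma Projectivization.isQuotientMap_mk' :
    IsQuotientMap (mk' K : {v : V // v ≠ 0} → ℙ K V) :=
  isQuotientMap_quotient_mk'

lemma Projectivization.isOpenMap_mk' [T1Space V] [ContinuousConstSMul K V] :
    IsOpenMap (mk' K : {v : V // v ≠ 0} → ℙ K V) := by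
  intro O hO
  rw [← isQuotientMap_mk'.isOpen_preimage]
  have hsat : mk' K ⁻¹' (mk' K '' O) =
      ⋃ a : Kˣ, (fun v : {v : V // v ≠ 0} => a • v.1) ⁻¹' (Subtype.val '' O) := by
    ext v
    simp only [Set.mem_preimage, Set.mem_image, Set.mem_iUnion, mk'_eq_mk, mk_eq_mk_iff]
    constructor
    · rintro ⟨w, hw, a, ha⟩
      exact ⟨a, w, hw, ha.symm⟩
    · rintro ⟨a, w, hw, ha⟩
      exact ⟨w, hw, a, ha.symm⟩
  rw [hsat]
  exact isOpen_iUnion fun a => (isOpen_compl_singleton.isOpenMap_subtype_val O hO).preimage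
    ((continuous_const_smul (a : K)).comp continuous_subtype_val)

lemma Projectivization.isOpenQuotientMap_mk' [T1Space V] [ContinuousConstSMul K V] :
    IsOpenQuotientMap (mk' K : {v : V // v ≠ 0} → ℙ K V) :=
  .of_isOpenMap_isQuotientMap isOpenMap_mk' isQuotientMap_mk'

end ProjectiveTopology

instance zeroF_neBot : zeroF.NeBot := by
  unfold zeroF
  refine comap_neBot_iff_frequently.2 (Frequently.filter_mono ?_ (nhdsWithin_le_nhds (s := {0}ᶜ)))
  exact (eventually_nhdsWithin_of_forall fun z hz => ⟨Units.mk0 z hz, rfl⟩).frequently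

lemma tendsto_zpow_zeroF {d : ℤ} (hd : 0 < d) :
    Tendsto (fun lam : ℂˣ => (lam : ℂ) ^ d) zeroF (𝓝 0) := by
  have h := continuousAt_zpow₀ (0 : ℂ) d (Or.inr hd.le)
  rw [ContinuousAt, zero_zpow d hd.ne'] at h
  exact h.comp tendsto_comap

section

variable {M : ℕ} {j : Fin M → ℕ}

lemma Idx.ext {b c : Idx j} (h1 : b.1 = c.1) (h2 : (b.2 : ℕ) = c.2) : b = c :=
  Sigma.ext h1 ((Fin.heq_ext_iff (congrArg j h1)).2 h2)

lemma col_add_val (b : Idx j) : col b + b.2 + 1 = j b.1 := by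
  have := b.2.isLt
  unfold col
  omega

lemma wt_lt_wt_of_blt {b c : Idx j} (h : blt b c) : wt M b < wt M c := by
  have hb := b.1.isLt
  unfold wt
  rcases h with h | ⟨h1, h2⟩
  · have : (M : ℤ) * (col c + 1) ≤ M * col b := by gcongr; exact_mod_cast h
    linarith
  · rw [h1]
    have : (b.1 : ℤ) < c.1 := by exact_mod_cast h2
    linarith

lemma blt_trichotomy (b c : Idx j) : blt b c ∨ b = c ∨ blt c b := by
  rcases lt_trichotomy (col c) (col b) with h | h | h
  · exact Or.inl (Or.inl h)
  · rcases lt_trichotomy b.1 c.1 with h2 | h2 | h2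
    · exact Or.inl (Or.inr ⟨h.symm, h2⟩)
    · refine Or.inr (Or.inl (Idx.ext h2 ?_))
      have := congrArg j h2
      have := col_add_val b
      have := col_add_val c
      omega
    · exact Or.inr (Or.inr (Or.inr ⟨h, h2⟩))
  · exact Or.inr (Or.inr (Or.inl h))

lemma blt_iff_wt_lt {b c : Idx j} : blt b c ↔ wt M b < wt M c := by
  refine ⟨wt_lt_wt_of_blt, fun h => ?_⟩
  rcases blt_trichotomy b c with hbc | rfl | hcb
  · exact hbc
  · exact absurd h (lt_irrefl _)
  · exact absurd (wt_lt_wt_of_blt hcb) h.not_gt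

lemma wt_injective : Function.Injective (wt M : Idx j → ℤ) := by
  intro b c h
  rcases blt_trichotomy b c with hbc | hbc | hcb
  · exact absurd h (wt_lt_wt_of_blt hbc).ne
  · exact hbc
  · exact absurd h (wt_lt_wt_of_blt hcb).ne'

lemma blt_irrefl (b : Idx j) : ¬ blt b b := by
  rw [blt_iff_wt_lt]
  exact lt_irrefl _

lemma blt_asymm {b c : Idx j} (h : blt b c) : ¬ blt c b := by
  rw [blt_iff_wt_lt] at *
  exact h.not_gt

lemma blt_of_not_blt_of_ne {b c : Idx j} (h : ¬ blt b c) (hne : c ≠ b) : blt c b := by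
  rcases blt_trichotomy b c with hbc | hbc | hcb
  · exact absurd hbc h
  · exact absurd hbc.symm hne
  · exact hcb

lemma eVec_apply (b c : Idx j) : eVec b c = if c = b then 1 else 0 := Pi.single_apply b 1 c

lemma Jmap_pow_apply (t : ℕ) (v : Vsp j) (c : Idx j) :
    (Jmap j ^ t) v c = if h : t ≤ c.2 then v ⟨c.1, ⟨c.2 - t, by omega⟩⟩ else 0 := by
  induction t generalizing v c with
  | zero => simp
  | succ t ih =>
    rw [pow_succ', Module.End.mul_apply]
    show (if h : 0 < (c.2 : ℕ) then _ else 0) = _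
    by_cases h : t + 1 ≤ c.2
    · rw [dif_pos (by omega), ih, dif_pos (by dsimp only; omega), dif_pos h]
      exact congrArg v (Idx.ext rfl (by dsimp only; omega))
    · rw [dif_neg h]
      split_ifs with h0
      · rw [ih, dif_neg (by dsimp only; omega)]
      · rfl

lemma Jmap_pow_apply_of_shift {t : ℕ} (v : Vsp j) {b c : Idx j} (h1 : c.1 = b.1)
    (h2 : (c.2 : ℕ) = b.2 + t) : (Jmap j ^ t) v c = v b := by
  rw [Jmap_pow_apply, dif_pos (by omega)]
  exact congrArg v (Idx.ext h1 (by dsimp only; omega))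

lemma Jmap_pow_apply_eq_zero_of_blt {t : ℕ} {v : Vsp j} {b b' c : Idx j}
    (hv : ∀ c, blt c b → v c = 0) (h1 : b'.1 = b.1) (h2 : (b'.2 : ℕ) = b.2 + t)
    (hc : blt c b') : (Jmap j ^ t) v c = 0 := by
  rw [Jmap_pow_apply]
  split_ifs with ht
  · have := congrArg j h1
    have := col_add_val b; have := col_add_val b'; have := col_add_val c
    have := col_add_val (⟨c.1, ⟨c.2 - t, by omega⟩⟩ : Idx j)
    dsimp only at *
    apply hv
    rcases hc with hc | ⟨hc1, hc2⟩
    · exact Or.inl (by omega)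
    · exact Or.inr ⟨by omega, h1 ▸ hc2⟩
  · rfl

lemma Jmap_eq_zero_of_col_pos {v : Vsp j} (hv : ∀ c, 0 < col c → v c = 0) : Jmap j v = 0 := by
  funext c
  show (if h : 0 < (c.2 : ℕ) then _ else 0) = 0
  split_ifs with h
  · apply hv
    have := col_add_val c
    have := col_add_val (⟨c.1, ⟨c.2 - 1, by omega⟩⟩ : Idx j)
    dsimp only at *
    omega
  · rfl

lemma Jmap_eVec_eq_zero_iff (b : Idx j) : Jmap j (eVec b) = 0 ↔ col b = 0 := by
  have hb := col_add_val b
  constructor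
  · intro h
    by_contra hcol
    have key : (Jmap j ^ 1) (eVec b) ⟨b.1, ⟨b.2 + 1, by omega⟩⟩ = eVec b b :=
      Jmap_pow_apply_of_shift _ rfl rfl
    rw [pow_one, h, eVec_apply, if_pos rfl] at key
    exact zero_ne_one key
  · intro h
    refine Jmap_eq_zero_of_col_pos fun c hc => ?_
    rw [eVec_apply, if_neg]
    rintro rfl
    omega

lemma Jmap_eVec_apply_ne_zero {b d : Idx j} (h : Jmap j (eVec b) d ≠ 0) :
    d.1 = b.1 ∧ (d.2 : ℕ) = b.2 + 1 := by
  rw [← pow_one (Jmap j), Jmap_pow_apply] at h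
  split_ifs at h with h1
  · rw [eVec_apply] at h
    split_ifs at h with h2
    · rw [← h2]
      exact ⟨rfl, by dsimp only; omega⟩
    · exact absurd rfl h
  · exact absurd rfl h

lemma apply_ne_zero_of_mem_span_eVec {v : Vsp j} {d : Idx j} (hv : v ∈ ℂ ∙ eVec d)
    (hv0 : v ≠ 0) : v d ≠ 0 := by
  obtain ⟨a, rfl⟩ := Submodule.mem_span_singleton.1 hv
  have ha : a ≠ 0 := by rintro rfl; simp at hv0
  simpa [eVec_apply] using ha

/-- `coordRatio b b x = 1` exactly where `x_b ≠ 0`; elsewhere it is `0 / 0 = 0`. -/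
noncomputable def coordRatio (b c : Idx j) (x : ℙ ℂ (Vsp j)) : ℂ := x.rep c / x.rep b

lemma coordRatio_mk (b c : Idx j) (v : Vsp j) (hv : v ≠ 0) :
    coordRatio b c (mk ℂ v hv) = v c / v b := by
  obtain ⟨a, ha⟩ := exists_smul_eq_mk_rep ℂ v hv
  simp only [coordRatio, ← ha, Pi.smul_apply, Units.smul_def, smul_eq_mul,
    mul_div_mul_left _ _ a.ne_zero]

lemma continuousAt_coordRatio {b : Idx j} (c : Idx j) {x : ℙ ℂ (Vsp j)} (hx : x.rep b ≠ 0) :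
    ContinuousAt (coordRatio b c) x := by
  suffices ContinuousAt (coordRatio b c) (mk' ℂ ⟨x.rep, x.rep_nonzero⟩) by
    rwa [mk'_eq_mk, x.mk_rep] at this
  rw [← isOpenQuotientMap_mk'.continuousAt_comp_iff]
  have : coordRatio b c ∘ mk' ℂ = fun v : {v : Vsp j // v ≠ 0} => v.1 c / v.1 b :=
    funext fun v => coordRatio_mk b c v.1 v.2
  rw [this]
  exact ((continuous_apply c).comp continuous_subtype_val).continuousAt.div
    ((continuous_apply b).comp continuous_subtype_val).continuousAt hx

lemma mk_mem_Cb_iff {b : Idx j} (v : Vsp j) (hv : v ≠ 0) :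
    mk ℂ v hv ∈ Cb b ↔ v b ≠ 0 ∧ ∀ c, blt c b → v c = 0 := by
  refine ⟨fun ⟨u, hu, hvu, hub, hlow⟩ => ?_, fun h => ⟨v, hv, rfl, h⟩⟩
  obtain ⟨a, rfl⟩ := (mk_eq_mk_iff ℂ v u hv hu).1 hvu
  simpa [Units.smul_def, hub] using hlow

lemma mk_eVec_mem_Cb (b : Idx j) : mk ℂ (eVec b) (eVec_ne_zero b) ∈ Cb b :=
  (mk_mem_Cb_iff _ _).2 ⟨by simp [eVec_apply], fun c hc => by
    rw [eVec_apply, if_neg]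
    rintro rfl
    exact blt_irrefl c hc⟩

lemma rep_mem_Cb_iff {b : Idx j} (x : ℙ ℂ (Vsp j)) :
    x ∈ Cb b ↔ x.rep b ≠ 0 ∧ ∀ c, blt c b → x.rep c = 0 := by
  conv_lhs => rw [← x.mk_rep]
  exact mk_mem_Cb_iff _ _

section WeightedAction

variable (w : Idx j → ℤ)

lemma coordRatio_map_scaleV_zpow (lam : ℂˣ) (b c : Idx j) (u : Vsp j) (hu : u ≠ 0) :
    coordRatio b c (Projectivization.map (scaleV fun c => lam ^ w c) (scaleV_injective _)
      (mk ℂ u hu)) = (lam : ℂ) ^ (w c - w b) * (u c / u b) := by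
  rw [map_mk, coordRatio_mk]
  show ((lam ^ w c : ℂˣ) : ℂ) * u c / ((lam ^ w b : ℂˣ) * u b) = _
  rw [Units.val_zpow_eq_zpow_val, Units.val_zpow_eq_zpow_val, zpow_sub₀ lam.ne_zero]
  field_simp

lemma mem_of_tendsto_map_scaleV_zpow {b : Idx j} {u : Vsp j} {hu : u ≠ 0}
    (h : Tendsto (fun lam : ℂˣ => Projectivization.map (scaleV fun c => lam ^ w c)
      (scaleV_injective _) (mk ℂ u hu)) zeroF (𝓝 (mk ℂ (eVec b) (eVec_ne_zero b)))) :
    u b ≠ 0 ∧ ∀ c, w c < w b → u c = 0 := by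
  have hrep := ((rep_mem_Cb_iff _).1 (mk_eVec_mem_Cb b)).1
  have hlim : ∀ c, Tendsto (fun lam : ℂˣ => (lam : ℂ) ^ (w c - w b) * (u c / u b)) zeroF
      (𝓝 (eVec b c / eVec b b)) := fun c => by
    have := (continuousAt_coordRatio c hrep).tendsto.comp h
    rw [coordRatio_mk] at this
    exact this.congr fun lam => coordRatio_map_scaleV_zpow w lam b c u hu
  have hub : u b ≠ 0 := by
    intro hub
    have := hlim b
    simp only [hub, div_zero, mul_zero, eVec_apply, if_pos, div_one] at this
    exact zero_ne_one (tendsto_nhds_unique tendsto_const_nhds this)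
  refine ⟨hub, fun c hc => ?_⟩
  have hprod := (tendsto_zpow_zeroF (sub_pos.2 hc)).mul (hlim c)
  rw [zero_mul] at hprod
  have hconst : Tendsto (fun _ : ℂˣ => u c / u b) zeroF (𝓝 0) := hprod.congr fun lam => by
    rw [← mul_assoc, ← zpow_add₀ lam.ne_zero, sub_add_sub_cancel, sub_self, zpow_zero,
      one_mul]
  simpa [hub] using tendsto_nhds_unique tendsto_const_nhds hconst

lemma tendsto_map_scaleV_zpow_of_mem (hw : Function.Injective w) {b : Idx j} {u : Vsp j}
    (hu : u ≠ 0) (hub : u b ≠ 0) (hlow : ∀ c, w c < w b → u c = 0) :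
    Tendsto (fun lam : ℂˣ => Projectivization.map (scaleV fun c => lam ^ w c)
      (scaleV_injective _) (mk ℂ u hu)) zeroF (𝓝 (mk ℂ (eVec b) (eVec_ne_zero b))) := by
  set v : ℂˣ → Vsp j := fun lam c => (lam : ℂ) ^ (w c - w b) * (u c / u b)
  have hvb : ∀ lam, v lam b = 1 := fun lam => by simp [v, hub]
  have hv0 : ∀ lam, v lam ≠ 0 := fun lam h => by simpa [h] using hvb lam
  have hmap : ∀ lam : ℂˣ, Projectivization.map (scaleV fun c => lam ^ w c) (scaleV_injective _)
      (mk ℂ u hu) = mk' ℂ ⟨v lam, hv0 lam⟩ := fun lam => by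
    rw [map_mk, mk'_eq_mk, mk_eq_mk_iff']
    refine ⟨(lam : ℂ) ^ w b * u b, funext fun c => ?_⟩
    show _ * ((lam : ℂ) ^ (w c - w b) * (u c / u b)) = ((lam ^ w c : ℂˣ) : ℂ) * u c
    rw [Units.val_zpow_eq_zpow_val, zpow_sub₀ lam.ne_zero]
    field_simp
  have hv : Tendsto v zeroF (𝓝 (eVec b)) := by
    refine tendsto_pi_nhds.2 fun c => ?_
    by_cases hcb : c = b
    · subst hcb
      simp only [hvb, eVec_apply, if_pos]
      exact tendsto_const_nhds
    by_cases huc : u c = 0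
    · simp only [v, huc, zero_div, mul_zero, eVec_apply, if_neg hcb]
      exact tendsto_const_nhds
    have hwc : w b < w c :=
      lt_of_le_of_ne (not_lt.1 fun h => huc (hlow c h)) fun h => hcb (hw h).symm
    simpa [eVec_apply, hcb] using (tendsto_zpow_zeroF (sub_pos.2 hwc)).mul_const (u c / u b)
  simp only [hmap]
  exact (isQuotientMap_mk'.continuous.tendsto ⟨eVec b, eVec_ne_zero b⟩).comp
    (tendsto_subtype_rng.2 hv)

lemma tendsto_map_scaleV_zpow_iff (hw : Function.Injective w) (b : Idx j) (u : Vsp j)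
    (hu : u ≠ 0) :
    Tendsto (fun lam : ℂˣ => Projectivization.map (scaleV fun c => lam ^ w c)
      (scaleV_injective _) (mk ℂ u hu)) zeroF (𝓝 (mk ℂ (eVec b) (eVec_ne_zero b))) ↔
      u b ≠ 0 ∧ ∀ c, w c < w b → u c = 0 :=
  ⟨mem_of_tendsto_map_scaleV_zpow w, fun h => tendsto_map_scaleV_zpow_of_mem w hw hu h.1 h.2⟩

end WeightedAction

lemma tendsto_actP_iff_mem_Cb (b : Idx j) (x : ℙ ℂ (Vsp j)) :
    Tendsto (fun lam : ℂˣ => actP lam x) zeroF (𝓝 (mk ℂ (eVec b) (eVec_ne_zero b))) ↔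
      x ∈ Cb b := by
  induction x using Projectivization.ind with
  | h u hu =>
    simp only [mk_mem_Cb_iff, blt_iff_wt_lt]
    exact tendsto_map_scaleV_zpow_iff (wt M) wt_injective b u hu

lemma cell_eq_setOf_tendsto {n : ℕ} {p : ZMod n → ℙ ℂ (Vsp j)} {f : ZMod n → Idx j}
    (hp : IsFixedPt n p f) :
    cell n f = {L | L ∈ QG n j ∧
      Tendsto (fun lam : ℂˣ => fun i => actP lam (L i)) zeroF (𝓝 p)} := by
  ext L
  simp only [cell, Set.mem_inter_iff, Set.mem_ofPred_eq, tendsto_pi_nhds, hp.2,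
    tendsto_actP_iff_mem_Cb]

lemma Jmap_pow_mem_submodule {n : ℕ} {L : ZMod n → ℙ ℂ (Vsp j)} (hL : L ∈ QG n j)
    {i : ZMod n} {v : Vsp j} (hv : v ∈ (L i).submodule) (t : ℕ) :
    (Jmap j ^ t) v ∈ (L (i + t)).submodule := by
  induction t with
  | zero => simpa using hv
  | succ t ih =>
    rw [pow_succ', Module.End.mul_apply, Nat.cast_succ, ← add_assoc]
    exact hL _ (Submodule.mem_map_of_mem ih)

section FixedPoint

variable {n : ℕ} {p : ZMod n → ℙ ℂ (Vsp j)} {f : ZMod n → Idx j}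

def IsStartingVertex (f : ZMod n → Idx j) (i : ZMod n) : Prop := Jmap j (eVec (f (i - 1))) = 0

lemma isStartingVertex_add_one_iff (i : ZMod n) :
    IsStartingVertex f (i + 1) ↔ col (f i) = 0 := by
  rw [IsStartingVertex, add_sub_cancel_right, Jmap_eVec_eq_zero_iff]

lemma index_add_one_of_not_isStartingVertex (hp : IsFixedPt n p f) {i : ZMod n}
    (h : ¬ IsStartingVertex f (i + 1)) :
    (f (i + 1)).1 = (f i).1 ∧ ((f (i + 1)).2 : ℕ) = (f i).2 + 1 := by
  rw [IsStartingVertex, add_sub_cancel_right] at h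
  have hmem : Jmap j (eVec (f i)) ∈ ℂ ∙ eVec (f (i + 1)) := by
    have := hp.1 i
    rw [hp.2 i, hp.2 (i + 1), submodule_mk, submodule_mk] at this
    exact this (Submodule.mem_map_of_mem (Submodule.mem_span_singleton_self _))
  exact Jmap_eVec_apply_ne_zero (apply_ne_zero_of_mem_span_eVec hmem h)

lemma col_sub_one_of_not_isStartingVertex (hp : IsFixedPt n p f) {i : ZMod n}
    (h : ¬ IsStartingVertex f i) : col (f (i - 1)) = col (f i) + 1 := by
  rw [← sub_add_cancel i 1] at h
  obtain ⟨h1, h2⟩ := index_add_one_of_not_isStartingVertex hp h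
  rw [sub_add_cancel] at h1 h2
  have := congrArg j h1
  have := col_add_val (f (i - 1))
  have := col_add_val (f i)
  omega

variable [NeZero n]

open scoped Classical

/-- Going backwards `col` grows by one at each non-starting vertex, so a full turn around
the cycle must meet a starting vertex. -/
lemma exists_isStartingVertex_sub (hp : IsFixedPt n p f) (i : ZMod n) :
    ∃ t : ℕ, IsStartingVertex f (i - t) := by
  by_contra! hno
  have hcol : ∀ t : ℕ, col (f (i - t)) = col (f i) + t := by
    intro t
    induction t with
    | zero => simp
    | succ t ih =>
      rw [Nat.cast_succ, ← sub_sub, col_sub_one_of_not_isStartingVertex hp (hno t), ih]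
      ring
  have := hcol n
  rw [ZMod.natCast_self, sub_zero] at this
  exact NeZero.ne n (by omega)

noncomputable def startDist (hp : IsFixedPt n p f) (i : ZMod n) : ℕ :=
  Nat.find (exists_isStartingVertex_sub hp i)

noncomputable def lastStart (hp : IsFixedPt n p f) (i : ZMod n) : ZMod n := i - startDist hp i

lemma isStartingVertex_lastStart (hp : IsFixedPt n p f) (i : ZMod n) :
    IsStartingVertex f (lastStart hp i) :=
  Nat.find_spec (exists_isStartingVertex_sub hp i)

lemma not_isStartingVertex_sub_of_lt (hp : IsFixedPt n p f) {i : ZMod n} {t : ℕ}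
    (ht : t < startDist hp i) : ¬ IsStartingVertex f (i - t) :=
  Nat.find_min (exists_isStartingVertex_sub hp i) ht

lemma lastStart_add_startDist (hp : IsFixedPt n p f) (i : ZMod n) :
    lastStart hp i + startDist hp i = i :=
  sub_add_cancel _ _

lemma startDist_eq_zero (hp : IsFixedPt n p f) {i : ZMod n} (h : IsStartingVertex f i) :
    startDist hp i = 0 :=
  (Nat.find_eq_zero _).2 (by simpa using h)

lemma lastStart_eq_self (hp : IsFixedPt n p f) {i : ZMod n} (h : IsStartingVertex f i) :
    lastStart hp i = i := by
  simp [lastStart, startDist_eq_zero hp h]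

lemma startDist_add_one (hp : IsFixedPt n p f) {i : ZMod n}
    (h : ¬ IsStartingVertex f (i + 1)) : startDist hp (i + 1) = startDist hp i + 1 := by
  refine (Nat.find_eq_iff _).2 ⟨?_, fun m hm => ?_⟩
  · have e : i + 1 - ((startDist hp i + 1 : ℕ) : ZMod n) = lastStart hp i := by
      rw [lastStart]
      push_cast
      ring
    rw [e]
    exact isStartingVertex_lastStart hp i
  · cases m with
    | zero => simpa using h
    | succ m =>
      simpa [add_sub_add_right_eq_sub] using
        not_isStartingVertex_sub_of_lt hp (by omega : m < startDist hp i)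

lemma lastStart_add_one (hp : IsFixedPt n p f) {i : ZMod n}
    (h : ¬ IsStartingVertex f (i + 1)) : lastStart hp (i + 1) = lastStart hp i := by
  rw [lastStart, lastStart, startDist_add_one hp h]
  push_cast
  ring

lemma index_lastStart_add (hp : IsFixedPt n p f) (i : ZMod n) {t : ℕ}
    (ht : t ≤ startDist hp i) :
    (f (lastStart hp i + t)).1 = (f (lastStart hp i)).1 ∧
      ((f (lastStart hp i + t)).2 : ℕ) = (f (lastStart hp i)).2 + t := by
  induction t with
  | zero =>
    rw [Nat.cast_zero, add_zero]
    exact ⟨rfl, rfl⟩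
  | succ t ih =>
    have hstep : ¬ IsStartingVertex f (lastStart hp i + t + 1) := by
      have := not_isStartingVertex_sub_of_lt hp
        (by omega : startDist hp i - (t + 1) < startDist hp i)
      have e : i - ((startDist hp i - (t + 1) : ℕ) : ZMod n) = lastStart hp i + t + 1 := by
        rw [Nat.cast_sub ht, lastStart]
        push_cast
        ring
      rwa [e] at this
    obtain ⟨h1, h2⟩ := index_add_one_of_not_isStartingVertex hp hstep
    obtain ⟨ih1, ih2⟩ := ih (by omega)
    rw [Nat.cast_succ, ← add_assoc]
    exact ⟨h1.trans ih1, by omega⟩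

lemma index_eq_lastStart (hp : IsFixedPt n p f) (i : ZMod n) :
    (f i).1 = (f (lastStart hp i)).1 ∧
      ((f i).2 : ℕ) = (f (lastStart hp i)).2 + startDist hp i := by
  have := index_lastStart_add hp i le_rfl
  rwa [lastStart_add_startDist] at this

end FixedPoint

section Parametrization

open scoped Classical

variable {n : ℕ} {f : ZMod n → Idx j}

abbrev CellCoord (f : ZMod n → Idx j) : Type :=
  Σ s : {s : ZMod n // IsStartingVertex f s}, {c : Idx j // blt (f s) c}

noncomputable def startVec (a : CellCoord f → ℂ) (s : {s : ZMod n // IsStartingVertex f s}) :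
    Vsp j :=
  fun c => if c = f s then 1 else if h : blt (f s) c then a ⟨s, c, h⟩ else 0

lemma startVec_self (a : CellCoord f → ℂ) (s : {s : ZMod n // IsStartingVertex f s}) :
    startVec a s (f s) = 1 :=
  if_pos rfl

lemma startVec_of_blt (a : CellCoord f → ℂ) {s : {s : ZMod n // IsStartingVertex f s}}
    {c : Idx j} (h : blt (f s) c) : startVec a s c = a ⟨s, c, h⟩ := by
  rw [startVec, if_neg (fun hc => blt_irrefl _ (by rwa [hc] at h)), dif_pos h]

lemma startVec_eq_zero_of_blt (a : CellCoord f → ℂ) {s : {s : ZMod n // IsStartingVertex f s}}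
    {c : Idx j} (h : blt c (f s)) : startVec a s c = 0 := by
  rw [startVec, if_neg (fun hc => blt_irrefl _ (by rwa [hc] at h)), dif_neg (blt_asymm h)]

lemma continuous_startVec (s : {s : ZMod n // IsStartingVertex f s}) :
    Continuous fun a : CellCoord f → ℂ => startVec a s := by
  refine continuous_pi fun c => ?_
  simp only [startVec]
  split_ifs
  exacts [continuous_const, continuous_apply _, continuous_const]

noncomputable def cellChart (L : cell n f) : CellCoord f → ℂ :=
  fun x => coordRatio (f x.1) x.2 (L.1 x.1)

lemma continuous_cellChart : Continuous (cellChart (f := f)) := by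
  refine continuous_pi fun x => continuous_iff_continuousAt.2 fun L => ?_
  have hL := ((rep_mem_Cb_iff _).1 (L.2.2 x.1)).1
  exact (continuousAt_coordRatio x.2 hL).comp (f := fun L : cell n f => L.1 x.1)
    ((continuous_apply x.1.1).comp continuous_subtype_val).continuousAt

lemma startVec_cellChart (L : cell n f) (s : {s : ZMod n // IsStartingVertex f s}) :
    startVec (cellChart L) s = ((L.1 s).rep (f s))⁻¹ • (L.1 s).rep := by
  obtain ⟨hrep, hlow⟩ := (rep_mem_Cb_iff _).1 (L.2.2 s)
  funext c
  rw [Pi.smul_apply, smul_eq_mul]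
  by_cases hc : c = f s
  · rw [hc, startVec_self, inv_mul_cancel₀ hrep]
  by_cases hlt : blt (f s) c
  · rw [startVec_of_blt _ hlt, cellChart, coordRatio, div_eq_inv_mul]
  · have hcs := blt_of_not_blt_of_ne hlt hc
    rw [startVec_eq_zero_of_blt _ hcs, hlow c hcs, mul_zero]

variable [NeZero n] {p : ZMod n → ℙ ℂ (Vsp j)} (hp : IsFixedPt n p f)
include hp

noncomputable def cellVec (a : CellCoord f → ℂ) (i : ZMod n) : Vsp j :=
  (Jmap j ^ startDist hp i) (startVec a ⟨lastStart hp i, isStartingVertex_lastStart hp i⟩)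

lemma cellVec_apply_self (a : CellCoord f → ℂ) (i : ZMod n) : cellVec hp a i (f i) = 1 := by
  obtain ⟨h1, h2⟩ := index_eq_lastStart hp i
  rw [cellVec, Jmap_pow_apply_of_shift _ h1 h2, startVec_self]

lemma cellVec_ne_zero (a : CellCoord f → ℂ) (i : ZMod n) : cellVec hp a i ≠ 0 := fun h => by
  simpa [h] using cellVec_apply_self hp a i

lemma cellVec_eq_zero_of_blt (a : CellCoord f → ℂ) {i : ZMod n} {c : Idx j} (hc : blt c (f i)) :
    cellVec hp a i c = 0 := by
  obtain ⟨h1, h2⟩ := index_eq_lastStart hp i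
  exact Jmap_pow_apply_eq_zero_of_blt (fun c hc => startVec_eq_zero_of_blt a hc) h1 h2 hc

lemma cellVec_of_isStartingVertex (a : CellCoord f → ℂ) {s : ZMod n}
    (h : IsStartingVertex f s) : cellVec hp a s = startVec a ⟨s, h⟩ := by
  have hs : (⟨lastStart hp s, isStartingVertex_lastStart hp s⟩ : {s // IsStartingVertex f s}) =
      ⟨s, h⟩ := Subtype.ext (lastStart_eq_self hp h)
  rw [cellVec, startDist_eq_zero hp h, hs, pow_zero, Module.End.one_apply]

lemma cellVec_add_one (a : CellCoord f → ℂ) {i : ZMod n} (h : ¬ IsStartingVertex f (i + 1)) :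
    cellVec hp a (i + 1) = Jmap j (cellVec hp a i) := by
  have hs : (⟨lastStart hp (i + 1), isStartingVertex_lastStart hp (i + 1)⟩ :
      {s // IsStartingVertex f s}) = ⟨lastStart hp i, isStartingVertex_lastStart hp i⟩ :=
    Subtype.ext (lastStart_add_one hp h)
  rw [cellVec, cellVec, startDist_add_one hp h, hs, pow_succ', Module.End.mul_apply]

/-- The line before a starting vertex has `col = 0`, so `J` kills it. -/
lemma Jmap_cellVec_eq_zero (a : CellCoord f → ℂ) {i : ZMod n} (h : IsStartingVertex f (i + 1)) :
    Jmap j (cellVec hp a i) = 0 :=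
  Jmap_eq_zero_of_col_pos fun _ hc =>
    cellVec_eq_zero_of_blt hp a (Or.inl ((isStartingVertex_add_one_iff i).1 h ▸ hc))

lemma mk_cellVec_mem_cell (a : CellCoord f → ℂ) :
    (fun i => mk ℂ (cellVec hp a i) (cellVec_ne_zero hp a i)) ∈ cell n f := by
  refine ⟨fun i => ?_, fun i => (mk_mem_Cb_iff _ _).2
    ⟨by simp [cellVec_apply_self], fun c hc => cellVec_eq_zero_of_blt hp a hc⟩⟩
  rw [submodule_mk, submodule_mk, Submodule.map_span, Set.image_singleton, Submodule.span_le,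
    Set.singleton_subset_iff]
  by_cases h : IsStartingVertex f (i + 1)
  · rw [Jmap_cellVec_eq_zero hp a h]
    exact Submodule.zero_mem _
  · rw [← cellVec_add_one hp a h]
    exact Submodule.mem_span_singleton_self _

noncomputable def cellParam (a : CellCoord f → ℂ) : cell n f :=
  ⟨fun i => mk ℂ (cellVec hp a i) (cellVec_ne_zero hp a i), mk_cellVec_mem_cell hp a⟩

lemma continuous_cellParam : Continuous (cellParam hp) := by
  refine Continuous.subtype_mk (continuous_pi fun i => ?_) _
  refine isQuotientMap_mk'.continuous.comp
    ((?_ : Continuous fun a => cellVec hp a i).subtype_mk (cellVec_ne_zero hp · i))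
  exact (LinearMap.continuous_of_finiteDimensional _).comp (continuous_startVec _)

lemma cellChart_cellParam (a : CellCoord f → ℂ) : cellChart (cellParam hp a) = a := by
  funext ⟨s, c⟩
  show coordRatio (f s) c (mk ℂ (cellVec hp a s) _) = _
  rw [coordRatio_mk, cellVec_apply_self, div_one, cellVec_of_isStartingVertex hp a s.2,
    startVec_of_blt a c.2]

/-- `J^t` carries the line at `s` into the line at `s + t`. -/
lemma cellParam_cellChart (L : cell n f) : cellParam hp (cellChart L) = L := by
  refine Subtype.ext (funext fun i => mk_eq_of_mem_submodule ?_ _)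
  have hv : startVec (cellChart L) ⟨lastStart hp i, isStartingVertex_lastStart hp i⟩ ∈
      (L.1 (lastStart hp i)).submodule := by
    rw [startVec_cellChart, submodule_eq]
    exact Submodule.smul_mem _ _ (Submodule.mem_span_singleton_self _)
  have := Jmap_pow_mem_submodule L.2.1 hv (startDist hp i)
  rwa [lastStart_add_startDist] at this

noncomputable def cellHomeomorph : cell n f ≃ₜ (CellCoord f → ℂ) where
  toFun := cellChart
  invFun := cellParam hp
  left_inv := cellParam_cellChart hp
  right_inv := cellChart_cellParam hp
  continuous_toFun := continuous_cellChart
  continuous_invFun := continuous_cellParam hp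

end Parametrization

lemma card_cellCoord {n : ℕ} [NeZero n] (f : ZMod n → Idx j) :
    Nat.card (CellCoord f) = dDim n f := by
  classical
  rw [Nat.card_eq_fintype_card, Fintype.card_sigma, dDim,
    ← Finset.sum_subtype (Finset.univ.filter (IsStartingVertex f)) (fun _ => by simp)
      (fun i => Fintype.card {c // blt (f i) c}), Finset.sum_filter]
  refine Finset.sum_congr rfl fun i _ => ?_
  simp only [IsStartingVertex, Nat.card_eq_fintype_card]
  split_ifs with h <;> simp [h]

end

theorem statement_3_general (n M : ℕ) [NeZero n] (j : Fin M → ℕ)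
    (p : ZMod n → ℙ ℂ (Vsp j)) (f : ZMod n → Idx j) (hp : IsFixedPt n p f) :
    cell n f =
      {L | L ∈ QG n j ∧
        Filter.Tendsto (fun lam : ℂˣ => fun i => actP lam (L i)) zeroF (𝓝 p)} ∧
    Nonempty (↥(cell n f) ≃ₜ (Fin (dDim n f) → ℂ)) :=
  ⟨cell_eq_setOf_tendsto hp, ⟨(cellHomeomorph hp).trans
    (Homeomorph.piCongrLeft (Y := fun _ => ℂ)
      ((Finite.equivFin _).trans (finCongr (card_cellCoord f))))⟩⟩

theorem statement_3 (n M : ℕ) [NeZero n] (hM : 1 ≤ M) (j : Fin M → ℕ)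
    (hpart : Antitone j) (hj : ∀ l, 1 ≤ j l)
    (p : ZMod n → ℙ ℂ (Vsp j)) (f : ZMod n → Idx j) (hp : IsFixedPt n p f) :
    cell n f =
      {L | L ∈ QG n j ∧
        Filter.Tendsto (fun lam : ℂˣ => fun i => actP lam (L i)) zeroF (𝓝 p)} ∧
    Nonempty (↥(cell n f) ≃ₜ (Fin (dDim n f) → ℂ)) :=
  statement_3_general n M j p f hp
end

section
/- Let p be a fixed point of X with index function f and let S be the set of starting vertices of p. Then S is nonempty; for each a ∈ S, letting m_a ≥ 0 be minimal with J e_{f(a+m_a)} = 0 and σ_a = {a, a+1, …, a+m_a} ⊆ ℤ/nℤ, the sets σ_a (a ∈ S) partition ℤ/nℤ; and the restriction map L ↦ ((L_i)_{i∈σ_a})_{a∈S} is a homeomorphism from X ∩ ∏_{i∈ℤ/nℤ} Z_{f(i)} onto the product ∏_{a∈S} Y_a, where Y_a = {(L_i)_{i∈σ_a} ∈ ∏_{i∈σ_a} Z_{f(i)} : J(L_{a+k}) ⊆ L_{a+k+1} for all 0 ≤ k < m_a}. -/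
open LinearAlgebra.Projectivization Projectivization Filter Topology

/-- The set of starting vertices of a fixed point with index function `f`. -/
def startSet {M : ℕ} {j : Fin M → ℕ} (n : ℕ) (f : ZMod n → Idx j) : Set (ZMod n) :=
  {i | Jmap j (eVec (f (i - 1))) = 0}

/-- The segment `σ_a = {a, a+1, …, a + m a}` of `ℤ/nℤ`. -/
def sigmaSet (n : ℕ) (m : ZMod n → ℕ) (a : ZMod n) : Set (ZMod n) :=
  {x | ∃ k ≤ m a, x = a + (k : ZMod n)}

/-- The factor `Y_a`: tuples `(L_i)_{i ∈ σ_a}` with `L_i ∈ Z_{f(i)}` and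
`J(L_{a+k}) ⊆ L_{a+k+1}` for all `0 ≤ k < m a`. -/
def Ysp {M : ℕ} {j : Fin M → ℕ} (n : ℕ) (f : ZMod n → Idx j) (m : ZMod n → ℕ)
    (a : ZMod n) : Set (↥(sigmaSet n m a) → ℙ ℂ (Vsp j)) :=
  {L | (∀ i, L i ∈ Zb (f i.val)) ∧
    ∀ (k : ℕ) (hk : k < m a),
      (L ⟨a + (k : ZMod n), ⟨k, hk.le, rfl⟩⟩).submodule.map (Jmap j) ≤
        (L ⟨a + ((k + 1 : ℕ) : ZMod n), ⟨k + 1, hk, rfl⟩⟩).submodule}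

/-! If `J e_{f(i)} ≠ 0`, the fixed-point condition forces `f(i+1)` to be the successor of `f(i)`
in its Jordan block, so `col ∘ f` drops by one along such an edge. Since `col` is bounded, walking
backwards from any vertex reaches a starting vertex, and the segments `σ_a` cut `ℤ/nℤ` at the
vertices where `J e_{f(i)}` vanishes. There `f(i)` ends its block, so `J` kills all of `Z_{f(i)}`
and the edge condition `i → i+1` holds automatically on the closed cell; every other edge
condition lives inside one segment, which makes the restriction map a homeomorphism. -/

section Jordan

variable {M : ℕ} {j : Fin M → ℕ}

lemma jmap_apply_ne_zero {u : Vsp j} {c : Idx j} (h : Jmap j u c ≠ 0) :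
    ∃ hc : 0 < c.2.val, u ⟨c.1, ⟨c.2.val - 1, by omega⟩⟩ ≠ 0 := by
  simp only [Jmap, LinearMap.coe_mk, AddHom.coe_mk] at h
  split_ifs at h with hc
  · exact ⟨hc, h⟩
  · exact absurd rfl h

lemma col_lt_of_jmap_eVec_mem_span {b c : Idx j} (hne : Jmap j (eVec b) ≠ 0)
    (hmem : Jmap j (eVec b) ∈ ℂ ∙ eVec c) : col c < col b := by
  obtain ⟨t, ht⟩ := Submodule.mem_span_singleton.1 hmem
  have hc : Jmap j (eVec b) c ≠ 0 := by
    rw [← ht] at hne ⊢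
    simpa [eVec] using left_ne_zero_of_smul hne
  obtain ⟨hpos, hb⟩ := jmap_apply_ne_zero hc
  have hbc : b = ⟨c.1, ⟨c.2.val - 1, by omega⟩⟩ := by
    by_contra hne'
    exact hb (by simp [eVec, Ne.symm hne'])
  subst hbc
  simp only [col]
  omega

lemma col_eq_zero_of_jmap_eVec_eq_zero {b : Idx j} (h : Jmap j (eVec b) = 0) : col b = 0 := by
  by_contra hcol
  have hlt : b.2.val + 1 < j b.1 := by simp only [col] at hcol; omega
  have := congrFun h ⟨b.1, ⟨b.2.val + 1, hlt⟩⟩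
  simp [Jmap, eVec] at this

lemma jmap_eq_zero_of_forall_blt {b : Idx j} (hb : col b = 0) {u : Vsp j}
    (hu : ∀ c, blt c b → u c = 0) : Jmap j u = 0 := by
  by_contra h
  obtain ⟨c, hc⟩ := Function.ne_iff.1 h
  obtain ⟨hpos, hu'⟩ := jmap_apply_ne_zero hc
  refine hu' (hu _ (Or.inl ?_))
  rw [hb]
  simp only [col]
  omega

lemma map_submodule_eq_bot_of_mem_Zb {b : Idx j} (hb : Jmap j (eVec b) = 0) {x : ℙ ℂ (Vsp j)}
    (hx : x ∈ Zb b) : x.submodule.map (Jmap j) = ⊥ := by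
  obtain ⟨u, hu, rfl, hub⟩ := hx
  rw [Projectivization.submodule_mk, Submodule.map_span, Set.image_singleton,
    jmap_eq_zero_of_forall_blt (col_eq_zero_of_jmap_eVec_eq_zero hb) hub,
    Submodule.span_zero_singleton]

end Jordan

section Segments

variable {n : ℕ} {T : ZMod n → Prop} {m : ZMod n → ℕ}

/-- `T i` marks the vertices with `J e_{f(i)} = 0`; a segment starts after such a vertex and
`m a` is its length up to the next one. -/
def IsSegmentLength (T : ZMod n → Prop) (m : ZMod n → ℕ) : Prop :=
  ∀ a, T (a - 1) → T (a + m a) ∧ ∀ k < m a, ¬ T (a + k)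

lemma exists_terminal_before (φ : ZMod n → ℕ) (B : ℕ) (hφB : ∀ i, φ i ≤ B)
    (hφ : ∀ i, ¬ T i → φ (i + 1) < φ i) (i : ZMod n) : ∃ k : ℕ, T (i - k - 1) := by
  by_contra! h
  have hgrow : ∀ k : ℕ, φ i + k ≤ φ (i - k) := by
    intro k
    induction k with
    | zero => simp
    | succ k ih =>
      have := hφ _ (h k)
      rw [sub_add_cancel] at this
      rw [Nat.cast_succ, ← sub_sub]
      omega
  have := hgrow (B + 1)
  have := hφB (i - (B + 1 : ℕ))
  omega

lemma exists_start_mem_sigmaSet (hm : IsSegmentLength T m) (hex : ∀ i, ∃ k : ℕ, T (i - k - 1))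
    (i : ZMod n) : ∃ a, T (a - 1) ∧ i ∈ sigmaSet n m a := by
  classical
  set k := Nat.find (hex i)
  have hstart : T (i - k - 1) := Nat.find_spec (hex i)
  refine ⟨i - k, hstart, k, ?_, by ring⟩
  by_contra! hk
  refine Nat.find_min (hex i) (m := k - (m (i - k) + 1)) (by omega) ?_
  convert (hm _ hstart).1 using 2
  rw [Nat.cast_sub (by omega)]
  push_cast
  ring

lemma eq_of_add_natCast_eq (hm : IsSegmentLength T m) {a b : ZMod n} (ha : T (a - 1))
    (hb : T (b - 1)) {k k' : ℕ} (hk : k ≤ m a) (hk' : k' ≤ k) (h : a + k = b + k') :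
    a = b := by
  obtain ⟨d, rfl⟩ := Nat.exists_eq_add_of_le hk'
  have hba : b = a + d := by push_cast at h; linear_combination -h
  cases d with
  | zero => simpa using hba.symm
  | succ d =>
    refine absurd ?_ ((hm a ha).2 d (by omega))
    convert hb using 1
    rw [hba]
    push_cast
    ring

lemma sigmaSet_disjoint (hm : IsSegmentLength T m)
    {a b : ZMod n} (ha : T (a - 1)) (hb : T (b - 1)) (hab : a ≠ b) :
    Disjoint (sigmaSet n m a) (sigmaSet n m b) := by
  rw [Set.disjoint_left]
  rintro x ⟨k, hk, rfl⟩ ⟨k', hk', hx⟩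
  rcases le_total k' k with h | h
  · exact hab (eq_of_add_natCast_eq hm ha hb hk h hx)
  · exact hab (eq_of_add_natCast_eq hm hb ha hk' h hx.symm).symm

end Segments

noncomputable def Homeomorph.restrictPartition {ι S X : Type*} [TopologicalSpace X]
    (σ : S → Set ι) (hσ : ∀ i, ∃! a, i ∈ σ a) (A : Set (ι → X)) (Y : ∀ a, Set (σ a → X))
    (hAY : ∀ L, L ∈ A ↔ ∀ a, (fun i : σ a => L i) ∈ Y a) :
    A ≃ₜ ∀ a, Y a := by
  classical
  choose owner howner huniq using hσ
  let glue : (∀ a, Y a) → ι → X := fun y i => (y (owner i)).1 ⟨i, howner i⟩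
  have glue_apply : ∀ y a (i : σ a), glue y i = (y a).1 i := by
    rintro y a ⟨i, hi⟩
    obtain rfl := huniq i a hi
    rfl
  exact
    { toFun L a := ⟨fun i => L.1 i, (hAY L.1).1 L.2 a⟩
      invFun y := ⟨glue y, (hAY _).2 fun a => by simpa only [glue_apply] using (y a).2⟩
      left_inv L := rfl
      right_inv y := funext fun a => Subtype.ext (funext (glue_apply y a))
      continuous_toFun := continuous_pi fun a => Continuous.subtype_mk
        (continuous_pi fun i => (continuous_apply i.1).comp continuous_subtype_val) _
      continuous_invFun := by
        refine Continuous.subtype_mk (continuous_pi fun i => ?_) _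
        exact (continuous_apply _).comp
          (continuous_subtype_val.comp (continuous_apply (owner i))) }

section FixedPoint

variable {n M : ℕ} {j : Fin M → ℕ} {f : ZMod n → Idx j}

lemma IsFixedPt.col_succ_lt {p : ZMod n → ℙ ℂ (Vsp j)} (hp : IsFixedPt n p f) {i : ZMod n}
    (hi : Jmap j (eVec (f i)) ≠ 0) : col (f (i + 1)) < col (f i) := by
  refine col_lt_of_jmap_eVec_mem_span hi ?_
  have hedge := hp.1 i
  rw [hp.2 i, hp.2 (i + 1), submodule_mk, submodule_mk] at hedge
  exact hedge (Submodule.mem_map_of_mem (Submodule.mem_span_singleton_self _))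

lemma mem_QG_inter_Zb_iff {m : ZMod n → ℕ}
    (hterm : ∀ a ∈ startSet n f, Jmap j (eVec (f (a + (m a : ZMod n)))) = 0)
    (hcov : ∀ i, ∃ a ∈ startSet n f, i ∈ sigmaSet n m a) (L : ZMod n → ℙ ℂ (Vsp j)) :
    L ∈ QG n j ∩ {L | ∀ i, L i ∈ Zb (f i)} ↔
      ∀ a : startSet n f, (fun i : sigmaSet n m a => L i) ∈ Ysp n f m a := by
  constructor
  · rintro ⟨hL, hZ⟩ a
    refine ⟨fun i => hZ i, fun k _ => ?_⟩
    simpa only [Nat.cast_succ, add_assoc] using hL (a + k)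
  · intro hY
    refine ⟨fun i => ?_, fun i => ?_⟩
    · obtain ⟨a, ha, k, hk, rfl⟩ := hcov i
      rcases hk.lt_or_eq with hk | rfl
      · simpa only [Nat.cast_succ, add_assoc] using (hY ⟨a, ha⟩).2 k hk
      · have hZ := (hY ⟨a, ha⟩).1 ⟨_, m a, le_rfl, rfl⟩
        rw [map_submodule_eq_bot_of_mem_Zb (hterm a ha) hZ]
        exact bot_le
    · obtain ⟨a, ha, hi⟩ := hcov i
      exact (hY ⟨a, ha⟩).1 ⟨i, hi⟩

end FixedPoint

theorem statement_7_general (n M : ℕ) (j : Fin M → ℕ)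
    (p : ZMod n → ℙ ℂ (Vsp j)) (f : ZMod n → Idx j) (hp : IsFixedPt n p f)
    (m : ZMod n → ℕ)
    (hm : ∀ a ∈ startSet n f,
      Jmap j (eVec (f (a + (m a : ZMod n)))) = 0 ∧
        ∀ k < m a, Jmap j (eVec (f (a + (k : ZMod n)))) ≠ 0) :
    (startSet n f).Nonempty ∧
    (∀ a ∈ startSet n f, ∀ b ∈ startSet n f, a ≠ b →
      Disjoint (sigmaSet n m a) (sigmaSet n m b)) ∧
    (⋃ a ∈ startSet n f, sigmaSet n m a) = Set.univ ∧
    ∃ h : ↥(QG n j ∩ {L | ∀ i, L i ∈ Zb (f i)}) ≃ₜ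
        ((a : ↥(startSet n f)) → ↥(Ysp n f m a.val)),
      ∀ (L : ↥(QG n j ∩ {L | ∀ i, L i ∈ Zb (f i)}))
        (a : ↥(startSet n f)) (i : ↥(sigmaSet n m a.val)),
        ((h L a : ↥(sigmaSet n m a.val) → ℙ ℂ (Vsp j)) i) =
          (L : ZMod n → ℙ ℂ (Vsp j)) i.val := by
  have hseg : IsSegmentLength (fun i => Jmap j (eVec (f i)) = 0) m := hm
  have hcov : ∀ i, ∃ a ∈ startSet n f, i ∈ sigmaSet n m a :=
    exists_start_mem_sigmaSet hseg <| exists_terminal_before (col ∘ f) (Finset.univ.sup col)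
      (fun i => Finset.le_sup (Finset.mem_univ (f i))) fun i => hp.col_succ_lt
  have hdisj : ∀ a ∈ startSet n f, ∀ b ∈ startSet n f, a ≠ b →
      Disjoint (sigmaSet n m a) (sigmaSet n m b) :=
    fun a ha b hb => sigmaSet_disjoint hseg ha hb
  have hpart : ∀ i, ∃! a : startSet n f, i ∈ sigmaSet n m a := by
    intro i
    obtain ⟨a, ha, hi⟩ := hcov i
    refine ⟨⟨a, ha⟩, hi, fun b hb => Subtype.ext (by_contra fun hba => ?_)⟩
    exact Set.disjoint_left.1 (hdisj _ b.2 a ha hba) hb hi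
  obtain ⟨a, ha, -⟩ := hcov 0
  refine ⟨⟨a, ha⟩, hdisj, Set.eq_univ_of_forall fun i => by simpa using hcov i, ?_⟩
  exact ⟨Homeomorph.restrictPartition _ hpart _ _
    (mem_QG_inter_Zb_iff (fun a ha => (hm a ha).1) hcov), fun _ _ _ => rfl⟩

theorem statement_7 (n M : ℕ) (hn : 1 ≤ n) (hM : 1 ≤ M) (j : Fin M → ℕ)
    (hpart : Antitone j) (hj : ∀ l, 1 ≤ j l)
    (p : ZMod n → ℙ ℂ (Vsp j)) (f : ZMod n → Idx j) (hp : IsFixedPt n p f)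
    (m : ZMod n → ℕ)
    (hm : ∀ a ∈ startSet n f,
      Jmap j (eVec (f (a + (m a : ZMod n)))) = 0 ∧
        ∀ k < m a, Jmap j (eVec (f (a + (k : ZMod n)))) ≠ 0) :
    (startSet n f).Nonempty ∧
    (∀ a ∈ startSet n f, ∀ b ∈ startSet n f, a ≠ b →
      Disjoint (sigmaSet n m a) (sigmaSet n m b)) ∧
    (⋃ a ∈ startSet n f, sigmaSet n m a) = Set.univ ∧
    ∃ h : ↥(QG n j ∩ {L | ∀ i, L i ∈ Zb (f i)}) ≃ₜ
        ((a : ↥(startSet n f)) → ↥(Ysp n f m a.val)),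
      ∀ (L : ↥(QG n j ∩ {L | ∀ i, L i ∈ Zb (f i)}))
        (a : ↥(startSet n f)) (i : ↥(sigmaSet n m a.val)),
        ((h L a : ↥(sigmaSet n m a.val) → ℙ ℂ (Vsp j)) i) =
          (L : ZMod n → ℙ ℂ (Vsp j)) i.val :=
  statement_7_general n M j p f hp m hm
end

section
/- Let 1 ≤ n ≤ N and let ι : ℂ^n → ℂ^N be the linear map with ι(e_k) = e_{N−n+k} for 1 ≤ k ≤ n. Then the map (L_i)_{i∈ℤ/nℤ} ↦ (ι(L_i))_{i∈ℤ/nℤ} is a well-defined homeomorphism from X_n onto X_N. -/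
open LinearAlgebra.Projectivization Projectivization Filter Topology

noncomputable section

/-- The single nilpotent Jordan block `J_N` on `ℂ^N`: `J e_k = e_{k+1}` (`J e_N = 0`).
Indices are 0-based here (1-based in the paper). -/
def JN (N : ℕ) : (Fin N → ℂ) →ₗ[ℂ] (Fin N → ℂ) where
  toFun u k :=
    if h : 0 < k.val then u ⟨k.val - 1, lt_of_le_of_lt (Nat.sub_le _ _) k.isLt⟩ else 0
  map_add' u v := by funext k; by_cases h : 0 < k.val <;> simp [h]
  map_smul' a u := by funext k; by_cases h : 0 < k.val <;> simp [h]

/-- The quiver Grassmannian `X_N ⊆ ℙ(ℂ^N)^{ℤ/nℤ}`. -/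
def QGN (n N : ℕ) : Set (ZMod n → ℙ ℂ (Fin N → ℂ)) :=
  {L | ∀ i : ZMod n, (L i).submodule.map (JN N) ≤ (L (i + 1)).submodule}

end
/-- The embedding `ι : ℂ^N → ℂ^{N'}` with `ι(e_k) = e_{N'−N+k}` (1-based indices). -/
def iotaMap (N N' : ℕ) (h : N ≤ N') : (Fin N → ℂ) →ₗ[ℂ] (Fin N' → ℂ) where
  toFun u k :=
    if h2 : N' - N ≤ k.val then u ⟨k.val - (N' - N), by have := k.isLt; omega⟩ else 0
  map_add' u v := by
    funext k
    by_cases h2 : N' - N ≤ k.val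
    · simp only [dif_pos h2, Pi.add_apply]
    · simp only [dif_neg h2, Pi.add_apply, add_zero]
  map_smul' a u := by
    funext k
    by_cases h2 : N' - N ≤ k.val
    · simp only [dif_pos h2, Pi.smul_apply, smul_eq_mul, RingHom.id_apply]
    · simp only [dif_neg h2, Pi.smul_apply, smul_eq_mul, mul_zero, RingHom.id_apply]

namespace Statement11Aux

noncomputable section

lemma JN_apply (N : ℕ) (u : Fin N → ℂ) (k : Fin N) :
    JN N u k =
      if h : 0 < k.val then u ⟨k.val - 1, lt_of_le_of_lt (Nat.sub_le _ _) k.isLt⟩ else 0 := rfl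

lemma iotaMap_apply (n N : ℕ) (h : n ≤ N) (u : Fin n → ℂ) (k : Fin N) :
    iotaMap n N h u k =
      if h2 : N - n ≤ k.val then u ⟨k.val - (N - n), by have := k.isLt; omega⟩ else 0 := rfl

/-- The left-inverse projection `π : ℂ^N → ℂ^n`. -/
def piMapL (n N : ℕ) (h : n ≤ N) : (Fin N → ℂ) →ₗ[ℂ] (Fin n → ℂ) where
  toFun u k := u ⟨N - n + k.val, by have := k.isLt; omega⟩
  map_add' u v := rfl
  map_smul' a u := rfl

lemma piMapL_apply (n N : ℕ) (h : n ≤ N) (u : Fin N → ℂ) (k : Fin n) :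
    piMapL n N h u k = u ⟨N - n + k.val, by have := k.isLt; omega⟩ := rfl

lemma pi_iota (n N : ℕ) (h : n ≤ N) (u : Fin n → ℂ) :
    piMapL n N h (iotaMap n N h u) = u := by
  funext k
  rw [piMapL_apply, iotaMap_apply]
  rw [dif_pos (Nat.le_add_right _ _)]
  congr 1
  exact Fin.ext (by simp)

lemma iota_inj (n N : ℕ) (h : n ≤ N) : Function.Injective (iotaMap n N h) :=
  Function.LeftInverse.injective (pi_iota n N h)

lemma iota_ne_zero (n N : ℕ) (h : n ≤ N) {u : Fin n → ℂ} (hu : u ≠ 0) :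
    iotaMap n N h u ≠ 0 := fun c => hu (iota_inj n N h (by rw [c, map_zero]))

lemma iota_pi (n N : ℕ) (h : n ≤ N) (v : Fin N → ℂ)
    (hv : ∀ k : Fin N, k.val < N - n → v k = 0) :
    iotaMap n N h (piMapL n N h v) = v := by
  funext k
  rw [iotaMap_apply]
  by_cases h2 : N - n ≤ k.val
  · rw [dif_pos h2, piMapL_apply]
    congr 1
    exact Fin.ext (by simp; omega)
  · rw [dif_neg h2]
    exact (hv k (by omega)).symm

lemma iota_comm (n N : ℕ) (h : n ≤ N) :
    (JN N).comp (iotaMap n N h) = (iotaMap n N h).comp (JN n) := by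
  apply LinearMap.ext
  intro u
  funext k
  simp only [LinearMap.comp_apply, JN_apply, iotaMap_apply]
  split_ifs <;>
    first
      | rfl
      | (exfalso; omega)
      | (congr 1; exact Fin.ext (by simp; omega))

lemma JN_pow_apply (N m : ℕ) (u : Fin N → ℂ) (k : Fin N) :
    (JN N ^ m) u k =
      if h : m ≤ k.val then u ⟨k.val - m, lt_of_le_of_lt (Nat.sub_le _ _) k.isLt⟩ else 0 := by
  induction m generalizing u with
  | zero =>
      rw [pow_zero, dif_pos (Nat.zero_le _)]
      show u k = _
      congr 1
  | succ m ih =>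
      rw [pow_succ, Module.End.mul_apply, ih]
      simp only [JN_apply]
      split_ifs <;>
        first
          | rfl
          | (exfalso; omega)
          | (congr 1; exact Fin.ext (by simp; omega))

lemma JN_pow_eq_zero (N m : ℕ) (hm : N ≤ m) : (JN N ^ m) = (0 : (Fin N → ℂ) →ₗ[ℂ] (Fin N → ℂ)) := by
  apply LinearMap.ext
  intro u
  funext k
  rw [JN_pow_apply, dif_neg (by have := k.isLt; omega)]
  rfl

/-- The induced map on projectivizations. -/
def Pmap (n N : ℕ) (h : n ≤ N) : ℙ ℂ (Fin n → ℂ) → ℙ ℂ (Fin N → ℂ) :=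
  Projectivization.map (iotaMap n N h) (iota_inj n N h)

lemma Pmap_mk (n N : ℕ) (h : n ≤ N) (u : Fin n → ℂ) (hu : u ≠ 0) :
    Pmap n N h (Projectivization.mk ℂ u hu) =
      Projectivization.mk ℂ (iotaMap n N h u) (iota_ne_zero n N h hu) := by
  rw [Pmap, Projectivization.map_mk]

lemma submodule_Pmap (n N : ℕ) (h : n ≤ N) (x : ℙ ℂ (Fin n → ℂ)) :
    (Pmap n N h x).submodule = x.submodule.map (iotaMap n N h) := by
  conv_lhs => rw [← x.mk_rep]
  conv_rhs => rw [← x.mk_rep]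
  rw [Pmap_mk, Projectivization.submodule_mk, Projectivization.submodule_mk,
    Submodule.map_span, Set.image_singleton]

lemma continuous_Pmap (n N : ℕ) (h : n ≤ N) : Continuous (Pmap n N h) := by
  have hq : IsQuotientMap
      (fun v : {v : Fin n → ℂ // v ≠ 0} => Projectivization.mk ℂ v.1 v.2) :=
    isQuotientMap_quotient_mk'
  rw [hq.continuous_iff]
  have heq : (Pmap n N h) ∘ (fun v : {v : Fin n → ℂ // v ≠ 0} => Projectivization.mk ℂ v.1 v.2)
      = (fun v : {v : Fin N → ℂ // v ≠ 0} => Projectivization.mk ℂ v.1 v.2) ∘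
        (fun v : {v : Fin n → ℂ // v ≠ 0} =>
          (⟨iotaMap n N h v.1, iota_ne_zero n N h v.2⟩ : {v : Fin N → ℂ // v ≠ 0})) := by
    funext v
    exact Pmap_mk n N h v.1 v.2
  rw [heq]
  exact continuous_quotient_mk'.comp
    (Continuous.subtype_mk ((LinearMap.continuous_on_pi _).comp continuous_subtype_val) _)

lemma isInducing_Pmap (n N : ℕ) (h : n ≤ N) : IsInducing (Pmap n N h) := by
  constructor
  refine le_antisymm (continuous_iff_le_induced.mp (continuous_Pmap n N h)) ?_
  rw [TopologicalSpace.le_def]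
  intro U hU
  rw [isOpen_induced_iff]
  -- unpack openness of U
  have hq : IsQuotientMap
      (fun v : {v : Fin n → ℂ // v ≠ 0} => Projectivization.mk ℂ v.1 v.2) :=
    isQuotientMap_quotient_mk'
  have hpre : IsOpen ((fun v : {v : Fin n → ℂ // v ≠ 0} =>
      Projectivization.mk ℂ v.1 v.2) ⁻¹' U) := hq.isOpen_preimage.mpr hU
  obtain ⟨O, hO, hOeq⟩ := isOpen_induced_iff.mp hpre
  set T : Set (Fin n → ℂ) := O ∩ {w | w ≠ 0} with hTdef
  have hT : IsOpen T := hO.inter isOpen_ne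
  have hmemT : ∀ (w : Fin n → ℂ) (hw : w ≠ 0), w ∈ T ↔ Projectivization.mk ℂ w hw ∈ U := by
    intro w hw
    have h1 : ((⟨w, hw⟩ : {v : Fin n → ℂ // v ≠ 0}) ∈ Subtype.val ⁻¹' O) ↔
        ((⟨w, hw⟩ : {v : Fin n → ℂ // v ≠ 0}) ∈ (fun v : {v : Fin n → ℂ // v ≠ 0} =>
          Projectivization.mk ℂ v.1 v.2) ⁻¹' U) := by rw [hOeq]
    simp only [Set.mem_preimage] at h1
    constructor
    · intro hwT; exact h1.mp hwT.1
    · intro hU'; exact ⟨h1.mpr hU', hw⟩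
  have hsmulT : ∀ (c : ℂˣ) (w : Fin n → ℂ), w ∈ T → (c : ℂ) • w ∈ T := by
    intro c w hw
    have hw0 : w ≠ 0 := hw.2
    have hcw : (c : ℂ) • w ≠ 0 := smul_ne_zero c.ne_zero hw0
    have hmk : Projectivization.mk ℂ ((c : ℂ) • w) hcw = Projectivization.mk ℂ w hw0 :=
      (Projectivization.mk_eq_mk_iff ℂ _ _ _ _).mpr ⟨c, rfl⟩
    exact (hmemT _ hcw).mpr (hmk ▸ (hmemT _ hw0).mp hw)
  set S : Set (Fin N → ℂ) := (piMapL n N h) ⁻¹' T with hSdef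
  have hS : IsOpen S := hT.preimage (LinearMap.continuous_on_pi _)
  have hsmulS : ∀ (c : ℂˣ) (v : Fin N → ℂ), v ∈ S → c • v ∈ S := by
    intro c v hv
    show piMapL n N h (c • v) ∈ T
    have : piMapL n N h (c • v) = (c : ℂ) • piMapL n N h v := by
      rw [Units.smul_def, map_smul]
    rw [this]
    exact hsmulT c _ hv
  have hsmulS_iff : ∀ (c : ℂˣ) (v : Fin N → ℂ), c • v ∈ S ↔ v ∈ S := by
    intro c v
    refine ⟨fun hv => ?_, hsmulS c v⟩
    have := hsmulS c⁻¹ _ hv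
    rwa [inv_smul_smul] at this
  refine ⟨{x : ℙ ℂ (Fin N → ℂ) | x.rep ∈ S}, ?_, ?_⟩
  · have hqN : IsQuotientMap
        (fun v : {v : Fin N → ℂ // v ≠ 0} => Projectivization.mk ℂ v.1 v.2) :=
      isQuotientMap_quotient_mk'
    rw [← hqN.isOpen_preimage]
    have heq : (fun v : {v : Fin N → ℂ // v ≠ 0} => Projectivization.mk ℂ v.1 v.2) ⁻¹'
        {x : ℙ ℂ (Fin N → ℂ) | x.rep ∈ S} = Subtype.val ⁻¹' S := by
      ext v
      simp only [Set.mem_preimage, Set.mem_setOf_eq]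
      obtain ⟨a, ha⟩ := Projectivization.exists_smul_eq_mk_rep ℂ v.1 v.2
      rw [← ha]
      exact hsmulS_iff a v.1
    rw [heq]
    exact hS.preimage continuous_subtype_val
  · refine Set.ext (Projectivization.ind fun u hu => ?_)
    simp only [Set.mem_preimage, Set.mem_setOf_eq]
    rw [Pmap_mk]
    obtain ⟨a, ha⟩ := Projectivization.exists_smul_eq_mk_rep ℂ (iotaMap n N h u)
      (iota_ne_zero n N h hu)
    rw [← ha, hsmulS_iff a _]
    have : (iotaMap n N h u ∈ S) ↔ u ∈ T := by
      rw [hSdef, Set.mem_preimage, pi_iota]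
    rw [this]
    exact hmemT u hu

lemma isInducing_piMap {I : Type*} {X Y : I → Type*} [∀ i, TopologicalSpace (X i)]
    [∀ i, TopologicalSpace (Y i)] {f : ∀ i, X i → Y i} (hf : ∀ i, IsInducing (f i)) :
    IsInducing (fun (x : ∀ i, X i) (i : I) => f i (x i)) := by
  constructor
  refine le_antisymm (continuous_iff_le_induced.mp (Continuous.piMap fun i => (hf i).continuous)) ?_
  refine le_iInf fun i => ?_
  refine le_trans (induced_mono (iInf_le _ i)) (le_of_eq ?_)
  rw [induced_compose, (hf i).eq_induced, induced_compose]
  rfl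

end

end Statement11Aux

open Statement11Aux

theorem statement_11 (n N : ℕ) (hn : 1 ≤ n) (hnN : n ≤ N) :
    ∃ h : ↥(QGN n n) ≃ₜ ↥(QGN n N),
      ∀ (L : ↥(QGN n n)) (i : ZMod n),
        ((h L : ZMod n → ℙ ℂ (Fin N → ℂ)) i).submodule =
          Submodule.map (iotaMap n N hnN)
            ((L : ZMod n → ℙ ℂ (Fin n → ℂ)) i).submodule := by
  -- the forward map preserves the quiver Grassmannian condition
  have hmaps : ∀ L ∈ QGN n n, (fun i => Pmap n N hnN (L i)) ∈ QGN n N := by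
    intro L hL i
    rw [submodule_Pmap, submodule_Pmap, ← Submodule.map_comp, iota_comm, Submodule.map_comp]
    exact Submodule.map_mono (hL i)
  set F : ↥(QGN n n) → ↥(QGN n N) :=
    fun L => ⟨fun i => Pmap n N hnN (L.1 i), hmaps L.1 L.2⟩ with hFdef
  have Finj : Function.Injective F := by
    intro a b hab
    apply Subtype.ext
    funext i
    have h1 : Pmap n N hnN (a.1 i) = Pmap n N hnN (b.1 i) :=
      congrFun (congrArg Subtype.val hab) i
    exact Projectivization.map_injective (iotaMap n N hnN) (iota_inj n N hnN) h1
  have Fsurj : Function.Surjective F := by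
    rintro ⟨M, hM⟩
    -- each line lies in the kernel of J^n
    have hker : ∀ i : ZMod n, (JN N ^ n) ((M i).rep) = 0 := by
      intro i
      have hcyc : ∀ k : ℕ, ∀ j : ZMod n,
          ((M j).submodule).map ((JN N) ^ k) ≤ (M (j + (k : ZMod n))).submodule := by
        intro k
        induction k with
        | zero =>
            intro j
            simp only [pow_zero, Nat.cast_zero, add_zero, Module.End.one_eq_id,
              Submodule.map_id, le_refl]
        | succ k ih =>
            intro j
            rw [pow_succ, Module.End.mul_eq_comp, Submodule.map_comp]
            have h1 : ((M j).submodule.map (JN N)).map (JN N ^ k) ≤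
                (M (j + 1)).submodule.map (JN N ^ k) := Submodule.map_mono (hM j)
            have h2 : j + 1 + (k : ZMod n) = j + ((k + 1 : ℕ) : ZMod n) := by
              push_cast; ring
            exact le_trans h1 (le_trans (ih (j + 1)) (le_of_eq (by rw [h2])))
      have h2 := hcyc n i
      rw [ZMod.natCast_self, add_zero] at h2
      have hrepmem : (M i).rep ∈ (M i).submodule := by
        rw [Projectivization.submodule_eq]
        exact Submodule.mem_span_singleton_self _
      have hmem : (JN N ^ n) ((M i).rep) ∈ (M i).submodule :=
        h2 (Submodule.mem_map_of_mem hrepmem)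
      rw [Projectivization.submodule_eq] at hmem
      obtain ⟨c, hc⟩ := Submodule.mem_span_singleton.mp hmem
      have hpow : ∀ m : ℕ, ((JN N ^ n) ^ m) ((M i).rep) = c ^ m • (M i).rep := by
        intro m
        induction m with
        | zero => simp
        | succ m ih =>
            rw [pow_succ, Module.End.mul_apply, ← hc, map_smul, ih, smul_smul, mul_comm,
              ← pow_succ]
      have h0 : ((JN N ^ n) ^ N) ((M i).rep) = 0 := by
        rw [← pow_mul, JN_pow_eq_zero N (n * N) (Nat.le_mul_of_pos_left N hn)]
        rfl
      rw [hpow N] at h0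
      have hcN : c ^ N = 0 :=
        (smul_eq_zero.mp h0).resolve_right (Projectivization.rep_nonzero _)
      have hc0 : c = 0 := pow_eq_zero_iff (by omega : N ≠ 0) |>.mp hcN
      rw [← hc, hc0, zero_smul]
    have hrep : ∀ i : ZMod n,
        iotaMap n N hnN (piMapL n N hnN ((M i).rep)) = (M i).rep := by
      intro i
      refine iota_pi n N hnN _ ?_
      intro k hk
      have h4 := congrFun (hker i) (⟨k.val + n, by omega⟩ : Fin N)
      rw [JN_pow_apply] at h4
      simp only [Pi.zero_apply] at h4
      rw [dif_pos (by simp : n ≤ ((⟨k.val + n, by omega⟩ : Fin N) : ℕ))] at h4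
      have hkk : k = (⟨(⟨k.val + n, by omega⟩ : Fin N).val - n,
          lt_of_le_of_lt (Nat.sub_le _ _) (⟨k.val + n, by omega⟩ : Fin N).isLt⟩ : Fin N) :=
        Fin.ext (by simp)
      rw [hkk]
      exact h4
    have hu0 : ∀ i : ZMod n, piMapL n N hnN ((M i).rep) ≠ 0 := by
      intro i hz
      exact Projectivization.rep_nonzero (M i) (by rw [← hrep i, hz, map_zero])
    set L : ZMod n → ℙ ℂ (Fin n → ℂ) :=
      fun i => Projectivization.mk ℂ (piMapL n N hnN ((M i).rep)) (hu0 i) with hLdef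
    have hFL : ∀ i : ZMod n, Pmap n N hnN (L i) = M i := by
      intro i
      rw [hLdef]
      rw [Pmap_mk]
      have : Projectivization.mk ℂ (iotaMap n N hnN (piMapL n N hnN ((M i).rep)))
          (iota_ne_zero n N hnN (hu0 i)) =
          Projectivization.mk ℂ ((M i).rep) (Projectivization.rep_nonzero _) :=
        (Projectivization.mk_eq_mk_iff ℂ _ _ _ _).mpr ⟨1, by rw [one_smul, hrep i]⟩
      rw [this, Projectivization.mk_rep]
    have hL : L ∈ QGN n n := by
      intro i
      refine (Submodule.map_le_map_iff_of_injective (iota_inj n N hnN) _ _).mp ?_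
      rw [← Submodule.map_comp, ← iota_comm, Submodule.map_comp,
        ← submodule_Pmap, ← submodule_Pmap, hFL, hFL]
      exact hM i
    exact ⟨⟨L, hL⟩, Subtype.ext (funext hFL)⟩
  have contF : Continuous F :=
    Continuous.subtype_mk
      ((Continuous.piMap fun _ => continuous_Pmap n N hnN).comp continuous_subtype_val) _
  have hIndF : IsInducing F := by
    refine IsInducing.of_comp contF continuous_subtype_val ?_
    have heq : (Subtype.val ∘ F) =
        (fun (x : ZMod n → ℙ ℂ (Fin n → ℂ)) (i : ZMod n) => Pmap n N hnN (x i)) ∘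
          Subtype.val := rfl
    rw [heq]
    exact (isInducing_piMap fun _ => isInducing_Pmap n N hnN).comp IsInducing.subtypeVal
  refine ⟨(Equiv.ofBijective F ⟨Finj, Fsurj⟩).toHomeomorphOfIsInducing hIndF, ?_⟩
  intro L i
  exact submodule_Pmap n N hnN (L.1 i)
end

section
/- Let 1 ≤ N ≤ N' and let ι : ℂ^N → ℂ^{N'} be the linear map with ι(e_k) = e_{N'−N+k} for 1 ≤ k ≤ N. Then the map (L_i)_{i∈ℤ/nℤ} ↦ (ι(L_i))_{i∈ℤ/nℤ} is a well-defined topological embedding of X_N into X_{N'} (injective, continuous, and a homeomorphism onto its image). -/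
open LinearAlgebra.Projectivization Projectivization Filter Topology

noncomputable section Aux

variable {M : ℕ}

lemma sum_normSq_pos {v : Fin M → ℂ} (hv : v ≠ 0) :
    0 < ∑ k, Complex.normSq (v k) := by
  obtain ⟨k, hk⟩ : ∃ k, v k ≠ 0 := by
    by_contra hco; push_neg at hco; exact hv (funext hco)
  exact Finset.sum_pos' (fun i _ => Complex.normSq_nonneg _)
    ⟨k, Finset.mem_univ k, Complex.normSq_pos.mpr hk⟩

def pfun (M : ℕ) (v : Fin M → ℂ) : Fin M → Fin M → ℂ :=
  fun i j => v i * (starRingEnd ℂ) (v j) / ((∑ k, Complex.normSq (v k) : ℝ) : ℂ)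

lemma pfun_smul (c : ℂ) (hc : c ≠ 0) (v : Fin M → ℂ) (hv : v ≠ 0) :
    pfun M (c • v) = pfun M v := by
  have hc2 : (Complex.normSq c : ℂ) ≠ 0 := by
    exact_mod_cast (Complex.normSq_pos.mpr hc).ne'
  have hsum : (∑ k, Complex.normSq (c * v k) : ℝ) =
      Complex.normSq c * ∑ k, Complex.normSq (v k) := by
    simp [Complex.normSq_mul, Finset.mul_sum]
  funext i j
  simp only [pfun, Pi.smul_apply, smul_eq_mul, map_mul, ← Finset.mul_sum,
    Complex.ofReal_mul]
  rw [show c * v i * ((starRingEnd ℂ) c * (starRingEnd ℂ) (v j)) =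
      (Complex.normSq c : ℂ) * (v i * (starRingEnd ℂ) (v j)) from by
    rw [← Complex.mul_conj]; ring]
  rw [mul_div_mul_left _ _ hc2]

def pl (M : ℕ) : ℙ ℂ (Fin M → ℂ) → (Fin M → Fin M → ℂ) :=
  Projectivization.lift (fun v => pfun M v.1) (by
    rintro ⟨a, ha⟩ ⟨b, hb⟩ t rfl
    have ht : t ≠ 0 := by rintro rfl; simp at ha
    exact pfun_smul t ht b hb)

lemma continuous_pl : Continuous (pl M) := by
  apply Continuous.quotient_lift
  apply continuous_pi; intro i; apply continuous_pi; intro j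
  apply Continuous.div
  · exact ((continuous_apply i).comp continuous_subtype_val).mul
      (Complex.continuous_conj.comp ((continuous_apply j).comp continuous_subtype_val))
  · exact Complex.continuous_ofReal.comp <| continuous_finset_sum _ fun k _ =>
      Complex.continuous_normSq.comp ((continuous_apply k).comp continuous_subtype_val)
  · intro v
    exact_mod_cast (sum_normSq_pos v.2).ne'

lemma injective_pl : Function.Injective (pl M) := by
  intro x y h
  induction' x using Projectivization.ind with v hv
  induction' y using Projectivization.ind with w hw
  have h' : pfun M v = pfun M w := h
  set Sv := ((∑ k, Complex.normSq (v k) : ℝ) : ℂ) with hSv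
  set Sw := ((∑ k, Complex.normSq (w k) : ℝ) : ℂ) with hSw
  have hSv0 : Sv ≠ 0 := by
    simp only [hSv, ne_eq, Complex.ofReal_eq_zero]; exact (sum_normSq_pos hv).ne'
  have hSw0 : Sw ≠ 0 := by
    simp only [hSw, ne_eq, Complex.ofReal_eq_zero]; exact (sum_normSq_pos hw).ne'
  obtain ⟨l, hl⟩ : ∃ l, w l ≠ 0 := by
    by_contra hco; push_neg at hco; exact hw (funext hco)
  have E : ∀ i, v i * (starRingEnd ℂ) (v l) / Sv = w i * (starRingEnd ℂ) (w l) / Sw :=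
    fun i => congrFun (congrFun h' i) l
  have hcl : (starRingEnd ℂ) (w l) ≠ 0 := by simpa using hl
  have hvl : v l ≠ 0 := by
    intro h0
    have hEl := E l
    rw [h0, zero_mul, zero_div, eq_comm, div_eq_zero_iff] at hEl
    rcases hEl with h1 | h1
    · rw [Complex.mul_conj] at h1
      exact hl (by simpa using h1)
    · exact hSw0 h1
  have hcvl : (starRingEnd ℂ) (v l) ≠ 0 := by simpa using hvl
  refine (mk_eq_mk_iff' ℂ v w hv hw).mpr
    ⟨(starRingEnd ℂ) (w l) * Sv / (Sw * (starRingEnd ℂ) (v l)), funext fun i => ?_⟩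
  have Ei := E i
  rw [div_eq_div_iff hSv0 hSw0] at Ei
  show (starRingEnd ℂ) (w l) * Sv / (Sw * (starRingEnd ℂ) (v l)) * w i = v i
  rw [div_mul_eq_mul_div, div_eq_iff (mul_ne_zero hSw0 hcvl)]
  linear_combination -Ei

instance : T2Space (ℙ ℂ (Fin M → ℂ)) :=
  T2Space.of_injective_continuous injective_pl continuous_pl

def sphereToProj (M : ℕ) : (Metric.sphere (0 : Fin M → ℂ) 1) → ℙ ℂ (Fin M → ℂ) :=
  fun x => Projectivization.mk ℂ x.1 (by
    have hx := mem_sphere_zero_iff_norm.mp x.2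
    intro h0
    rw [h0] at hx
    simp at hx)

lemma continuous_sphereToProj : Continuous (sphereToProj M) := by
  exact continuous_quotient_mk'.comp (Continuous.subtype_mk continuous_subtype_val _)

lemma surjective_sphereToProj : Function.Surjective (sphereToProj M) := by
  intro x
  induction' x using Projectivization.ind with v hv
  have hnv : ‖v‖ ≠ 0 := norm_ne_zero_iff.mpr hv
  set u : Fin M → ℂ := ((‖v‖ : ℂ))⁻¹ • v with hu
  have hun : ‖u‖ = 1 := by
    rw [hu, norm_smul, norm_inv, Complex.norm_real, Real.norm_eq_abs,
      abs_of_nonneg (norm_nonneg v), inv_mul_cancel₀ hnv]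
  refine ⟨⟨u, mem_sphere_zero_iff_norm.mpr hun⟩, ?_⟩
  have hu0 : u ≠ 0 := by intro h0; rw [h0] at hun; simp at hun
  show Projectivization.mk ℂ u hu0 = Projectivization.mk ℂ v hv
  exact (mk_eq_mk_iff' ℂ u v hu0 hv).mpr ⟨((‖v‖ : ℂ))⁻¹, rfl⟩

instance : CompactSpace (ℙ ℂ (Fin M → ℂ)) :=
  ⟨(surjective_sphereToProj (M := M)).range_eq ▸ isCompact_range continuous_sphereToProj⟩

lemma mem_span_singleton_iff_minors (v w : Fin M → ℂ) (hw : w ≠ 0) :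
    v ∈ (ℂ ∙ w) ↔ ∀ k l, v k * w l = v l * w k := by
  constructor
  · rintro hv k l
    obtain ⟨c, rfl⟩ := Submodule.mem_span_singleton.mp hv
    simp only [Pi.smul_apply, smul_eq_mul]
    ring
  · intro hm
    obtain ⟨l, hl⟩ : ∃ l, w l ≠ 0 := by
      by_contra hco; push_neg at hco; exact hw (funext hco)
    refine Submodule.mem_span_singleton.mpr ⟨v l / w l, funext fun k => ?_⟩
    show v l / w l * w k = v k
    rw [div_mul_eq_mul_div, div_eq_iff hl]
    exact (hm k l).symm

lemma isClosed_QGN (n N : ℕ) : IsClosed (QGN n N) := by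
  set Φ : (ZMod n → Metric.sphere (0 : Fin N → ℂ) 1) → (ZMod n → ℙ ℂ (Fin N → ℂ)) :=
    fun S i => sphereToProj N (S i) with hΦ
  have hΦc : Continuous Φ :=
    continuous_pi fun i => continuous_sphereToProj.comp (continuous_apply i)
  have hΦs : Function.Surjective Φ := fun L =>
    ⟨fun i => (surjective_sphereToProj (L i)).choose,
      funext fun i => (surjective_sphereToProj (L i)).choose_spec⟩
  have hpre : Φ ⁻¹' (QGN n N) = ⋂ (i : ZMod n), ⋂ (k : Fin N), ⋂ (l : Fin N),
      {S | (JN N ((S i : Fin N → ℂ))) k * ((S (i+1) : Fin N → ℂ)) l =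
           (JN N ((S i : Fin N → ℂ))) l * ((S (i+1) : Fin N → ℂ)) k} := by
    ext S
    simp only [Set.mem_preimage, QGN, Set.mem_setOf_eq, Set.mem_iInter]
    have key : ∀ i : ZMod n,
        ((Φ S i).submodule.map (JN N) ≤ (Φ S (i+1)).submodule) ↔
        ∀ k l, (JN N ((S i : Fin N → ℂ))) k * ((S (i+1) : Fin N → ℂ)) l =
           (JN N ((S i : Fin N → ℂ))) l * ((S (i+1) : Fin N → ℂ)) k := by
      intro i
      show ((sphereToProj N (S i)).submodule.map (JN N) ≤
        (sphereToProj N (S (i+1))).submodule) ↔ _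
      rw [sphereToProj, sphereToProj, submodule_mk, submodule_mk, Submodule.map_span,
        Set.image_singleton, Submodule.span_singleton_le_iff_mem]
      refine mem_span_singleton_iff_minors _ _ ?_
      have hx := mem_sphere_zero_iff_norm.mp (S (i+1)).2
      intro h0; rw [h0] at hx; simp at hx
    exact forall_congr' key
  have hcpre : IsClosed (Φ ⁻¹' (QGN n N)) := by
    rw [hpre]
    refine isClosed_iInter fun i => isClosed_iInter fun k => isClosed_iInter fun l => ?_
    have hJ : Continuous (JN N) := (JN N).continuous_of_finiteDimensional
    have c1 : ∀ (j : ZMod n) (m : Fin N),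
        Continuous (fun S : (ZMod n → Metric.sphere (0 : Fin N → ℂ) 1) =>
          (JN N ((S j : Fin N → ℂ))) m) := fun j m =>
      (continuous_apply m).comp (hJ.comp (continuous_subtype_val.comp (continuous_apply j)))
    have c2 : ∀ (j : ZMod n) (m : Fin N),
        Continuous (fun S : (ZMod n → Metric.sphere (0 : Fin N → ℂ) 1) =>
          ((S j : Fin N → ℂ)) m) := fun j m =>
      (continuous_apply m).comp (continuous_subtype_val.comp (continuous_apply j))
    exact isClosed_eq (((c1 i k).mul (c2 (i+1) l))) (((c1 i l).mul (c2 (i+1) k)))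
  have : QGN n N = Φ '' (Φ ⁻¹' (QGN n N)) := (Set.image_preimage_eq _ hΦs).symm
  rw [this]
  exact (hΦc.isClosedMap _ hcpre)

end Aux

section Main

variable {N N' : ℕ} (hNN' : N ≤ N')

lemma iotaMap_injective : Function.Injective (iotaMap N N' hNN') := by
  intro u v huv
  funext k
  have hk : N' - N + k.val < N' := by have := k.isLt; omega
  have h := congrFun huv ⟨N' - N + k.val, hk⟩
  simp only [iotaMap, LinearMap.coe_mk, AddHom.coe_mk] at h
  rw [dif_pos (Nat.le_add_right _ _), dif_pos (Nat.le_add_right _ _)] at h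
  simpa [Nat.add_sub_cancel_left] using h

lemma jn_iota_comm :
    (JN N').comp (iotaMap N N' hNN') = (iotaMap N N' hNN').comp (JN N) := by
  apply LinearMap.ext; intro u
  funext k
  simp only [LinearMap.comp_apply, JN, iotaMap, LinearMap.coe_mk, AddHom.coe_mk]
  split_ifs <;> first
    | rfl
    | omega
    | (congr 1; apply Fin.ext; simp; omega)

lemma map_iota_submodule (x : ℙ ℂ (Fin N → ℂ)) :
    (Projectivization.map (iotaMap N N' hNN') (iotaMap_injective hNN') x).submodule =
      Submodule.map (iotaMap N N' hNN') x.submodule := by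
  induction' x using Projectivization.ind with v hv
  rw [Projectivization.map_mk, submodule_mk, submodule_mk, Submodule.map_span,
    Set.image_singleton]

lemma continuous_projmap_iota :
    Continuous (Projectivization.map (iotaMap N N' hNN') (iotaMap_injective hNN')) := by
  exact Continuous.quotient_map'
    (Continuous.subtype_mk
      ((iotaMap N N' hNN').continuous_of_finiteDimensional.comp continuous_subtype_val) _) _

end Main

theorem statement_12 (n N N' : ℕ) (hn : 1 ≤ n) (hN : 1 ≤ N) (hNN' : N ≤ N') :
    ∃ h : ↥(QGN n N) → ↥(QGN n N'),
      (∀ (L : ↥(QGN n N)) (i : ZMod n),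
        ((h L : ZMod n → ℙ ℂ (Fin N' → ℂ)) i).submodule =
          Submodule.map (iotaMap N N' hNN')
            ((L : ZMod n → ℙ ℂ (Fin N → ℂ)) i).submodule) ∧
      Function.Injective h ∧ Continuous h ∧ IsEmbedding h := by
  set ι := iotaMap N N' hNN' with hι
  set pm := Projectivization.map ι (iotaMap_injective hNN') with hpm
  have hmem : ∀ L : ↥(QGN n N), (fun i => pm ((L : ZMod n → ℙ ℂ (Fin N → ℂ)) i)) ∈ QGN n N' := by
    intro L i
    rw [map_iota_submodule, map_iota_submodule, ← Submodule.map_comp, jn_iota_comm,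
      Submodule.map_comp]
    exact Submodule.map_mono (L.2 i)
  refine ⟨fun L => ⟨fun i => pm ((L : ZMod n → ℙ ℂ (Fin N → ℂ)) i), hmem L⟩, ?_, ?_, ?_, ?_⟩
  · intro L i
    exact map_iota_submodule hNN' _
  · intro L L' hLL'
    apply Subtype.ext
    funext i
    exact Projectivization.map_injective ι (iotaMap_injective hNN')
      (congrFun (congrArg Subtype.val hLL') i)
  · exact Continuous.subtype_mk (continuous_pi fun i =>
      (continuous_projmap_iota hNN').comp ((continuous_apply i).comp continuous_subtype_val)) _
  · haveI : CompactSpace ↥(QGN n N) :=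
      isCompact_iff_compactSpace.mp (isClosed_QGN n N).isCompact
    have hcont : Continuous (fun L : ↥(QGN n N) =>
        (⟨fun i => pm ((L : ZMod n → ℙ ℂ (Fin N → ℂ)) i), hmem L⟩ : ↥(QGN n N'))) :=
      Continuous.subtype_mk (continuous_pi fun i =>
        (continuous_projmap_iota hNN').comp ((continuous_apply i).comp continuous_subtype_val)) _
    have hinj : Function.Injective (fun L : ↥(QGN n N) =>
        (⟨fun i => pm ((L : ZMod n → ℙ ℂ (Fin N → ℂ)) i), hmem L⟩ : ↥(QGN n N'))) := by
      intro L L' hLL'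
      apply Subtype.ext
      funext i
      exact Projectivization.map_injective ι (iotaMap_injective hNN')
        (congrFun (congrArg Subtype.val hLL') i)
    exact (hcont.isClosedEmbedding hinj).isEmbedding
end

section
/- The map p ↦ I_p = {i ∈ ℤ/nℤ : a_i = N} (where a is the index function of p) is a bijection from the set of fixed points of X_N onto the collection of nonempty subsets I ⊆ ℤ/nℤ such that for every i ∈ ℤ/nℤ there exists 0 ≤ k ≤ N−1 with i+k ∈ I; its inverse sends such a subset I to the fixed point with index function a_i = N − min{k ≥ 0 : i+k ∈ I}. -/
open LinearAlgebra.Projectivization Projectivization Filter Topology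

/-- The standard basis vector `e_k` of `ℂ^N`. -/
def eN {N : ℕ} (k : Fin N) : Fin N → ℂ := Pi.single k 1

lemma eN_ne_zero {N : ℕ} (k : Fin N) : eN k ≠ 0 := by
  intro h
  have := congrFun h k
  simp [eN] at this

/-- `p` is a fixed point of `X_N` with index function `a`. -/
def IsFixedPtN (n N : ℕ) (p : ZMod n → ℙ ℂ (Fin N → ℂ)) (a : ZMod n → Fin N) : Prop :=
  p ∈ QGN n N ∧ ∀ i, p i = Projectivization.mk ℂ (eN (a i)) (eN_ne_zero (a i))

/-! ### Auxiliary lemmas -/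

lemma JN_eN_of_lt {N : ℕ} (j : Fin N) (h : (j:ℕ) + 1 < N) :
    JN N (eN j) = eN ⟨(j:ℕ)+1, h⟩ := by
  funext k
  simp only [JN, LinearMap.coe_mk, AddHom.coe_mk, eN, Pi.single_apply]
  by_cases hk : 0 < (k:ℕ)
  · rw [dif_pos hk]
    have : ((⟨(k:ℕ)-1, lt_of_le_of_lt (Nat.sub_le _ _) k.isLt⟩ : Fin N) = j) ↔
        (k = ⟨(j:ℕ)+1, h⟩) := by
      rw [Fin.ext_iff, Fin.ext_iff]; simp; omega
    rw [if_congr this rfl rfl]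
  · rw [dif_neg hk, if_neg]
    intro hc; rw [Fin.ext_iff] at hc; simp at hc; omega

lemma JN_eN_last {N : ℕ} (j : Fin N) (h : (j:ℕ) + 1 = N) : JN N (eN j) = 0 := by
  funext k
  simp only [JN, LinearMap.coe_mk, AddHom.coe_mk, eN, Pi.single_apply, Pi.zero_apply]
  by_cases hk : 0 < (k:ℕ)
  · rw [dif_pos hk, if_neg]
    intro hc; rw [Fin.ext_iff] at hc; simp at hc; have := k.isLt; omega
  · rw [dif_neg hk]

lemma eN_mem_span {N : ℕ} {j k : Fin N} (h : eN j ∈ (Submodule.span ℂ {eN k})) : j = k := by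
  obtain ⟨c, hc⟩ := Submodule.mem_span_singleton.mp h
  by_contra hne
  have := congrFun hc j
  simp [eN, Pi.single_apply, hne] at this

lemma mk_eN_congr {N : ℕ} {j k : Fin N} (h : j = k) :
    Projectivization.mk ℂ (eN j) (eN_ne_zero j) = Projectivization.mk ℂ (eN k) (eN_ne_zero k) := by
  subst h; rfl

lemma step_of_fixed {n N : ℕ} {p : ZMod n → ℙ ℂ (Fin N → ℂ)} {a : ZMod n → Fin N}
    (hp : IsFixedPtN n N p a) :
    ∀ i, (a i:ℕ) ≠ N-1 → (a (i+1):ℕ) = (a i:ℕ)+1 := by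
  intro i hne
  have h := hp.1 i
  rw [hp.2 i, hp.2 (i+1), submodule_mk, submodule_mk] at h
  have hlt : (a i:ℕ) + 1 < N := by have := (a i).isLt; omega
  have hmem : JN N (eN (a i)) ∈ Submodule.span ℂ {eN (a (i+1))} := by
    apply h
    exact Submodule.mem_map_of_mem (Submodule.mem_span_singleton_self _)
  rw [JN_eN_of_lt (a i) hlt] at hmem
  have := eN_mem_span hmem
  rw [← this]

lemma exists_hit {n N : ℕ} (a : ZMod n → Fin N)
    (hstep : ∀ i, (a i:ℕ) ≠ N-1 → (a (i+1):ℕ) = (a i:ℕ)+1) :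
    ∀ i, ∃ k ≤ N-1, (a (i + (k:ZMod n)):ℕ) = N-1 := by
  suffices H : ∀ d i, N-1-(a i:ℕ) ≤ d → ∃ k ≤ d, (a (i + (k:ZMod n)):ℕ) = N-1 by
    intro i
    obtain ⟨k, hk, h⟩ := H (N-1) i (Nat.sub_le _ _)
    exact ⟨k, hk, h⟩
  intro d
  induction d with
  | zero =>
    intro i h
    refine ⟨0, le_refl _, ?_⟩
    have := (a i).isLt
    simp only [Nat.cast_zero, add_zero]
    omega
  | succ d ih =>
    intro i h
    by_cases hc : (a i:ℕ) = N-1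
    · exact ⟨0, Nat.zero_le _, by simpa using hc⟩
    · have h1 := hstep i hc
      obtain ⟨k, hk, hh⟩ := ih (i+1) (by omega)
      refine ⟨k+1, by omega, ?_⟩
      rw [show ((k+1:ℕ) : ZMod n) = (k:ZMod n) + 1 by push_cast; ring,
        show i + ((k:ZMod n)+1) = i + 1 + (k:ZMod n) by ring]
      exact hh

lemma key_val {n N : ℕ} (a : ZMod n → Fin N)
    (hstep : ∀ i, (a i:ℕ) ≠ N-1 → (a (i+1):ℕ) = (a i:ℕ)+1) (i : ZMod n) :
    (a i : ℕ) + 1 + sInf {k : ℕ | (a (i + (k:ZMod n)):ℕ) = N-1} = N := by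
  set S := {k : ℕ | (a (i + (k:ZMod n)):ℕ) = N-1} with hSdef
  have hS : S.Nonempty := by
    obtain ⟨k, _, h⟩ := exists_hit a hstep i; exact ⟨k, h⟩
  set m := sInf S with hm
  have hmem : m ∈ S := Nat.sInf_mem hS
  have hval : ∀ j, j ≤ m → (a (i + (j:ZMod n)):ℕ) = (a i:ℕ) + j := by
    intro j
    induction j with
    | zero => intro _; simp
    | succ j ih =>
      intro hj
      have hne : (a (i + (j:ZMod n)):ℕ) ≠ N-1 := by
        intro hc
        have : j ∈ S := hc
        have := Nat.sInf_le this
        omega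
      have h2 := hstep (i + (j:ZMod n)) hne
      rw [show ((j+1:ℕ):ZMod n) = (j:ZMod n)+1 by push_cast; ring, ← add_assoc, h2,
        ih (by omega)]
      ring
  have h3 := hval m le_rfl
  have h4 : (a (i + (m:ZMod n)):ℕ) = N-1 := hmem
  have := (a i).isLt
  omega

theorem statement_13 (n N : ℕ) (hn : 1 ≤ n) (hN : 1 ≤ N) :
    (∀ (p : ZMod n → ℙ ℂ (Fin N → ℂ)) (a : ZMod n → Fin N), IsFixedPtN n N p a →
      ({i : ZMod n | (a i : ℕ) = N - 1}.Nonempty ∧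
        ∀ i : ZMod n, ∃ k ≤ N - 1, (a (i + (k : ZMod n)) : ℕ) = N - 1)) ∧
    (∀ (p : ZMod n → ℙ ℂ (Fin N → ℂ)) (a : ZMod n → Fin N)
       (q : ZMod n → ℙ ℂ (Fin N → ℂ)) (b : ZMod n → Fin N),
      IsFixedPtN n N p a → IsFixedPtN n N q b →
      {i : ZMod n | (a i : ℕ) = N - 1} = {i : ZMod n | (b i : ℕ) = N - 1} → p = q) ∧
    (∀ I : Set (ZMod n), I.Nonempty → (∀ i : ZMod n, ∃ k ≤ N - 1, i + (k : ZMod n) ∈ I) →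
      ∃ (p : ZMod n → ℙ ℂ (Fin N → ℂ)) (a : ZMod n → Fin N), IsFixedPtN n N p a ∧
        {i : ZMod n | (a i : ℕ) = N - 1} = I ∧
        ∀ i : ZMod n, (a i : ℕ) + 1 + sInf {k : ℕ | i + (k : ZMod n) ∈ I} = N) := by
  refine ⟨?_, ?_, ?_⟩
  · -- Part 1
    intro p a hp
    have hstep := step_of_fixed hp
    have hhit := exists_hit a hstep
    constructor
    · obtain ⟨k, _, h⟩ := hhit 0
      exact ⟨(0:ZMod n) + (k:ZMod n), h⟩
    · exact hhit
  · -- Part 2: injectivity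
    intro p a q b hp hq hset
    have hstepa := step_of_fixed hp
    have hstepb := step_of_fixed hq
    have hab : ∀ i, a i = b i := by
      intro i
      have hSeq : {k : ℕ | (a (i + (k:ZMod n)):ℕ) = N-1}
          = {k : ℕ | (b (i + (k:ZMod n)):ℕ) = N-1} := by
        ext k
        constructor
        · intro h
          have : (i + (k:ZMod n)) ∈ {i : ZMod n | (a i : ℕ) = N - 1} := h
          rw [hset] at this; exact this
        · intro h
          have : (i + (k:ZMod n)) ∈ {i : ZMod n | (b i : ℕ) = N - 1} := h
          rw [← hset] at this; exact this
      have h1 := key_val a hstepa i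
      have h2 := key_val b hstepb i
      rw [hSeq] at h1
      exact Fin.ext (by omega)
    funext i
    rw [hp.2 i, hq.2 i]
    exact mk_eN_congr (hab i)
  · -- Part 3: surjectivity
    intro I hIne hIhit
    set f : ZMod n → ℕ := fun i => sInf {k : ℕ | i + (k:ZMod n) ∈ I} with hf
    have hSne : ∀ i, {k : ℕ | i + (k:ZMod n) ∈ I}.Nonempty := by
      intro i; obtain ⟨k, _, h⟩ := hIhit i; exact ⟨k, h⟩
    have hfmem : ∀ i, i + ((f i : ℕ):ZMod n) ∈ I := fun i => Nat.sInf_mem (hSne i)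
    have hfle : ∀ i, f i ≤ N - 1 := by
      intro i; obtain ⟨k, hk, h⟩ := hIhit i
      exact le_trans (Nat.sInf_le h) hk
    have hf0 : ∀ i, f i = 0 ↔ i ∈ I := by
      intro i
      constructor
      · intro h
        have := hfmem i
        rw [h] at this; simpa using this
      · intro h
        have : (0:ℕ) ∈ {k : ℕ | i + (k:ZMod n) ∈ I} := by simpa using h
        exact Nat.le_zero.mp (Nat.sInf_le this)
    have hfstep : ∀ i, f i ≠ 0 → f (i+1) = f i - 1 := by
      intro i h0
      have hle : f (i+1) ≤ f i - 1 := by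
        apply Nat.sInf_le
        show (i+1) + ((f i - 1 : ℕ):ZMod n) ∈ I
        have : (i+1) + ((f i - 1 : ℕ):ZMod n) = i + ((f i : ℕ):ZMod n) := by
          obtain ⟨g, hg⟩ : ∃ g, f i = g + 1 := ⟨f i - 1, by omega⟩
          rw [hg]
          simp only [Nat.add_sub_cancel]
          push_cast
          ring
        rw [this]
        exact hfmem i
      have hge : f i ≤ f (i+1) + 1 := by
        apply Nat.sInf_le
        show i + ((f (i+1) + 1 : ℕ):ZMod n) ∈ I
        have : i + ((f (i+1) + 1 : ℕ):ZMod n) = (i+1) + ((f (i+1) : ℕ):ZMod n) := by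
          push_cast; ring
        rw [this]
        exact hfmem (i+1)
      omega
    set a : ZMod n → Fin N := fun i => ⟨N - 1 - f i, by omega⟩ with ha
    refine ⟨fun i => Projectivization.mk ℂ (eN (a i)) (eN_ne_zero (a i)), a, ⟨?_, fun i => rfl⟩,
      ?_, ?_⟩
    · -- quiver condition
      intro i
      simp only [submodule_mk]
      rw [Submodule.map_span, Set.image_singleton, Submodule.span_le,
        Set.singleton_subset_iff]
      by_cases h0 : f i = 0
      · have hlast : ((a i : ℕ)) + 1 = N := by
          simp only [ha]; omega
        rw [JN_eN_last (a i) hlast]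
        exact Submodule.zero_mem _
      · have hlt : (a i : ℕ) + 1 < N := by
          have := hfle i
          simp only [ha]
          omega
        rw [JN_eN_of_lt (a i) hlt]
        have : (⟨(a i : ℕ) + 1, hlt⟩ : Fin N) = a (i+1) := by
          have h1 := hfstep i h0
          have h2 := hfle i
          apply Fin.ext
          simp only [ha, h1]
          omega
        rw [this]
        exact Submodule.mem_span_singleton_self _
    · -- set equality
      ext i
      simp only [Set.mem_setOf_eq, ha]
      have h1 := hfle i
      rw [show (N - 1 - f i = N - 1) ↔ f i = 0 by omega, hf0 i]
    · -- value equation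
      intro i
      have h1 := hfle i
      simp only [ha]
      have h2 : sInf {k : ℕ | i + (k:ZMod n) ∈ I} = f i := rfl
      rw [h2]
      omega
end

section
/- Suppose the fixed point q of X is obtained from the fixed point p by a mutation of one movable part, with {i : f_p(i) ≠ f_q(i)} = {a, a+1, …, a+r}; write f_p(a) = (l, j_l − m) and f_q(a) = (s, j_s − r). Then the stabilizer in T of the point p+q (defined by (p+q)_i = ℂ(e_{f_p(i)} + e_{f_q(i)})) equals {t ∈ T : t_0^{j_l−m} t_{m+a, l} = t_0^{j_s−r} t_{r+a, s}}, where the first indices m+a and r+a are taken mod n. -/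
open LinearAlgebra.Projectivization Projectivization Filter Topology

lemma eVec_add_ne_zero {M : ℕ} {j : Fin M → ℕ} (b c : Idx j) : eVec b + eVec c ≠ 0 := by
  intro h
  have h2 := congrFun h c
  simp [eVec, Pi.single_apply] at h2
  split_ifs at h2 <;> norm_num at h2

/-- The point `p+q`, given by `(p+q)_i = ℂ(e_{f_p(i)} + e_{f_q(i)})`. -/
noncomputable def pqPt {M : ℕ} {j : Fin M → ℕ} (n : ℕ) (fp fq : ZMod n → Idx j) :
    ZMod n → ℙ ℂ (Vsp j) :=
  fun i => Projectivization.mk ℂ (eVec (fp i) + eVec (fq i)) (eVec_add_ne_zero _ _)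

/-- The fixed point with index function `fq` is obtained from the fixed point with index
function `fp` by a mutation of one movable part. -/
def Mutation {M : ℕ} {j : Fin M → ℕ} (n : ℕ) (fp fq : ZMod n → Idx j) : Prop :=
  (∀ i, ble (fp i) (fq i)) ∧ fp ≠ fq ∧
  ∃ (a : ZMod n) (r : ℕ),
    {i | fp i ≠ fq i} = {x : ZMod n | ∃ k ≤ r, x = a + (k : ZMod n)} ∧
    Jmap j (eVec (fp (a - 1))) = 0 ∧
    ∀ k < r, Jmap j (eVec (fp (a + (k : ZMod n)))) ≠ 0

/-- The big torus `T = (ℂ^×)^{1+nM}`. -/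
abbrev TGrp (n M : ℕ) : Type := ℂˣ × (ZMod n × Fin M → ℂˣ)

/-- The coefficient by which `t ∈ T` scales the coordinate `b` over the vertex `jv`:
`t • e_{(l,i)} = t_0^{i−1} t_{j_l−i+jv, l} e_{(l,i)}`. -/
def tCoeff {M : ℕ} {j : Fin M → ℕ} (n : ℕ) (t : TGrp n M) (jv : ZMod n) (b : Idx j) : ℂˣ :=
  t.1 ^ b.2.val * t.2 (((col b : ℕ) : ZMod n) + jv, b.1)

/-- The action of `T` on `ℙ(V)^{ℤ/nℤ}`. -/
noncomputable def actT {M : ℕ} {j : Fin M → ℕ} (n : ℕ) (t : TGrp n M)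
    (L : ZMod n → ℙ ℂ (Vsp j)) : ZMod n → ℙ ℂ (Vsp j) :=
  fun jv => Projectivization.map (scaleV (tCoeff n t jv)) (scaleV_injective _) (L jv)
section Aux

variable {M : ℕ} {j : Fin M → ℕ}

lemma idx_ext_iff {bl cl : Fin M} {bi : Fin (j bl)} {ci : Fin (j cl)} :
    (⟨bl, bi⟩ : Idx j) = ⟨cl, ci⟩ ↔ bl = cl ∧ bi.val = ci.val := by
  constructor
  · intro h
    obtain ⟨h1, h2⟩ := Sigma.mk.inj_iff.mp h
    subst h1
    simp only [heq_eq_eq] at h2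
    exact ⟨rfl, congrArg Fin.val h2⟩
  · rintro ⟨rfl, h⟩
    congr 1
    exact Fin.ext h

lemma idx_eq_iff (b : Idx j) (l : Fin M) (i : Fin (j l)) :
    b = ⟨l, i⟩ ↔ b.1 = l ∧ b.2.val = i.val := by
  obtain ⟨bl, bi⟩ := b
  exact idx_ext_iff

lemma J_eVec (b : Idx j) :
    Jmap j (eVec b) = if h : b.2.val + 1 < j b.1 then eVec ⟨b.1, ⟨b.2.val + 1, h⟩⟩ else 0 := by
  obtain ⟨bl, bi⟩ := b
  funext c
  obtain ⟨cl, ci⟩ := c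
  simp only [Jmap, LinearMap.coe_mk, AddHom.coe_mk]
  by_cases hcl : cl = bl
  · subst hcl
    split_ifs with h1 h2 h2 <;>
      simp only [eVec_apply, idx_ext_iff, Pi.zero_apply, true_and] <;>
      split_ifs <;> first | rfl | omega
  · split_ifs with h1 h2 h2 <;>
      simp only [eVec_apply, idx_ext_iff, Pi.zero_apply] <;>
      split_ifs <;> first | rfl | omega | (exfalso; omega) | (exfalso; tauto)

lemma J_eVec_eq (b : Idx j) (h : b.2.val + 1 < j b.1) :
    Jmap j (eVec b) = eVec ⟨b.1, ⟨b.2.val + 1, h⟩⟩ := by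
  rw [J_eVec, dif_pos h]

lemma J_eVec_ne_zero (b : Idx j) (h : b.2.val + 1 < j b.1) :
    Jmap j (eVec b) ≠ 0 := by
  rw [J_eVec_eq b h]; exact eVec_ne_zero _

lemma J_eVec_zero (b : Idx j) (h : ¬ b.2.val + 1 < j b.1) :
    Jmap j (eVec b) = 0 := by
  rw [J_eVec, dif_neg h]

lemma eVec_mem_span (b c : Idx j) (h : eVec b ∈ (Submodule.span ℂ {eVec c})) : b = c := by
  rw [Submodule.mem_span_singleton] at h
  obtain ⟨α, hα⟩ := h
  by_contra hbc
  have := congrFun hα b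
  simp [eVec_apply, hbc] at this

/-- If the fixed point `p` is in the quiver Grassmannian and `J e_{f(i)} ≠ 0`, then
`f(i+1)` is the successor of `f(i)`. -/
lemma fixedPt_step {n : ℕ} {p : ZMod n → ℙ ℂ (Vsp j)} {f : ZMod n → Idx j}
    (hp : IsFixedPt n p f) (i : ZMod n) (h : (f i).2.val + 1 < j (f i).1) :
    f (i + 1) = ⟨(f i).1, ⟨(f i).2.val + 1, h⟩⟩ := by
  have h1 := hp.1 i
  rw [hp.2 i, hp.2 (i + 1), submodule_mk, submodule_mk] at h1
  have h2 : Jmap j (eVec (f i)) ∈ (Submodule.span ℂ {eVec (f i)}).map (Jmap j) :=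
    Submodule.mem_map_of_mem (Submodule.mem_span_singleton_self _)
  have h3 := h1 h2
  rw [J_eVec_eq (f i) h] at h3
  exact (eVec_mem_span _ _ h3).symm

lemma scale_pq_of_eq (κ : Idx j → ℂˣ) (b c : Idx j) (h : κ b = κ c) :
    Projectivization.map (scaleV κ) (scaleV_injective κ)
      (Projectivization.mk ℂ (eVec b + eVec c) (eVec_add_ne_zero b c)) =
      Projectivization.mk ℂ (eVec b + eVec c) (eVec_add_ne_zero b c) := by
  rw [map_mk, mk_eq_mk_iff]
  refine ⟨κ b, ?_⟩
  funext d
  simp only [scaleV, LinearMap.coe_mk, AddHom.coe_mk, Pi.smul_apply, Pi.add_apply,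
    Units.smul_def, smul_eq_mul]
  by_cases hdb : d = b
  · subst hdb; rfl
  · by_cases hdc : d = c
    · subst hdc
      rw [h]
    · rw [eVec_apply, eVec_apply, if_neg hdb, if_neg hdc]
      ring

lemma scale_pq_iff (κ : Idx j → ℂˣ) (b c : Idx j) (hbc : b ≠ c)
    (h : Projectivization.map (scaleV κ) (scaleV_injective κ)
      (Projectivization.mk ℂ (eVec b + eVec c) (eVec_add_ne_zero b c)) =
      Projectivization.mk ℂ (eVec b + eVec c) (eVec_add_ne_zero b c)) : κ b = κ c := by
  rw [map_mk, mk_eq_mk_iff] at h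
  obtain ⟨α, hα⟩ := h
  have hb := congrFun hα b
  have hc := congrFun hα c
  simp only [scaleV, LinearMap.coe_mk, AddHom.coe_mk, Pi.smul_apply, Pi.add_apply,
    Units.smul_def, smul_eq_mul, eVec_apply] at hb hc
  simp only [if_true, if_neg hbc, if_neg (Ne.symm hbc), add_zero, zero_add, mul_one] at hb hc
  ext
  rw [← hb, ← hc]

end Aux

theorem statement_18 (n M : ℕ) (hn : 1 ≤ n) (hM : 1 ≤ M) (j : Fin M → ℕ)
    (hpart : Antitone j) (hj : ∀ l, 1 ≤ j l)
    (p q : ZMod n → ℙ ℂ (Vsp j)) (fp fq : ZMod n → Idx j)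
    (hp : IsFixedPt n p fp) (hq : IsFixedPt n q fq)
    (hle : ∀ i, ble (fp i) (fq i)) (hne : fp ≠ fq)
    (a : ZMod n) (r : ℕ)
    (hdiff : {i | fp i ≠ fq i} = {x : ZMod n | ∃ k ≤ r, x = a + (k : ZMod n)})
    (hstart : Jmap j (eVec (fp (a - 1))) = 0)
    (hrun : ∀ k < r, Jmap j (eVec (fp (a + (k : ZMod n)))) ≠ 0)
    (hr : col (fq a) = r) :
    {t : TGrp n M | actT n t (pqPt n fp fq) = pqPt n fp fq} =
      {t : TGrp n M |
        t.1 ^ ((fp a).2.val + 1) * t.2 (((col (fp a) : ℕ) : ZMod n) + a, (fp a).1) =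
          t.1 ^ ((fq a).2.val + 1) * t.2 (((col (fq a) : ℕ) : ZMod n) + a, (fq a).1)} := by
  have hcolp : ∀ b : Idx j, col b = j b.1 - 1 - b.2.val := fun b => rfl
  have run : ∀ k, k ≤ r →
      ∃ (h1 : (fp a).2.val + k < j (fp a).1) (h2 : (fq a).2.val + k < j (fq a).1),
        fp (a + (k : ZMod n)) = ⟨(fp a).1, ⟨(fp a).2.val + k, h1⟩⟩ ∧
        fq (a + (k : ZMod n)) = ⟨(fq a).1, ⟨(fq a).2.val + k, h2⟩⟩ := by
    intro k
    induction k with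
    | zero =>
      intro _
      refine ⟨by have := (fp a).2.isLt; omega, by have := (fq a).2.isLt; omega, ?_, ?_⟩ <;>
        (simp only [Nat.cast_zero, add_zero]
         try exact (idx_eq_iff _ _ _).mpr ⟨rfl, rfl⟩)
    | succ k IH =>
      intro hk1
      obtain ⟨h1, h2, e1, e2⟩ := IH (by omega)
      have e1' := (idx_eq_iff _ _ _).mp e1
      have e2' := (idx_eq_iff _ _ _).mp e2
      dsimp only at e1' e2' 
      have hj1 : j (fp (a + (k : ZMod n))).1 = j (fp a).1 := by rw [e1'.1]
      have hj2 : j (fq (a + (k : ZMod n))).1 = j (fq a).1 := by rw [e2'.1]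
      have hltp : (fp (a + (k : ZMod n))).2.val + 1 < j (fp (a + (k : ZMod n))).1 := by
        by_contra hcon
        exact hrun k (by omega) (J_eVec_zero _ hcon)
      have hcol := hr
      rw [hcolp] at hcol
      have hql := (fq a).2.isLt
      have hltq : (fq (a + (k : ZMod n))).2.val + 1 < j (fq (a + (k : ZMod n))).1 := by
        have := e2'.2
        omega
      have hfp := fixedPt_step hp (a + (k : ZMod n)) hltp
      have hfq := fixedPt_step hq (a + (k : ZMod n)) hltq
      have hcast : a + ((k + 1 : ℕ) : ZMod n) = (a + (k : ZMod n)) + 1 := by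
        push_cast; ring
      have h1' : (fp a).2.val + (k + 1) < j (fp a).1 := by
        have := e1'.2; omega
      have h2' : (fq a).2.val + (k + 1) < j (fq a).1 := by
        have := e2'.2; omega
      refine ⟨h1', h2', ?_, ?_⟩
      · rw [hcast, hfp, idx_eq_iff]
        exact ⟨e1'.1, by have := e1'.2; simp; omega⟩
      · rw [hcast, hfq, idx_eq_iff]
        exact ⟨e2'.1, by have := e2'.2; simp; omega⟩
  ext t
  simp only [Set.mem_setOf_eq]
  constructor
  · intro ht
    have hane : fp a ≠ fq a := by
      have ha : a ∈ {i | fp i ≠ fq i} := by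
        rw [hdiff]
        exact ⟨0, Nat.zero_le r, by simp⟩
      exact ha
    have h1 := congrFun ht a
    have h2 : tCoeff n t a (fp a) = tCoeff n t a (fq a) :=
      scale_pq_iff (tCoeff n t a) (fp a) (fq a) hane h1
    simp only [tCoeff] at h2
    rw [pow_succ', pow_succ', mul_assoc, mul_assoc]
    exact congrArg (fun x => t.1 * x) h2
  · intro ht
    have key : t.1 ^ (fp a).2.val * t.2 (((col (fp a) : ℕ) : ZMod n) + a, (fp a).1)
             = t.1 ^ (fq a).2.val * t.2 (((col (fq a) : ℕ) : ZMod n) + a, (fq a).1) := by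
      rw [pow_succ', pow_succ', mul_assoc, mul_assoc] at ht
      exact mul_left_cancel ht
    funext jv
    by_cases hv : fp jv = fq jv
    · exact scale_pq_of_eq (tCoeff n t jv) (fp jv) (fq jv) (by rw [hv])
    · have hjv : jv ∈ {x : ZMod n | ∃ k ≤ r, x = a + (k : ZMod n)} := by
        rw [← hdiff]; exact hv
      obtain ⟨k, hkr, rfl⟩ := hjv
      obtain ⟨h1, h2, e1, e2⟩ := run k hkr
      have hcoeff : tCoeff n t (a + (k : ZMod n)) (fp (a + (k : ZMod n)))
                  = tCoeff n t (a + (k : ZMod n)) (fq (a + (k : ZMod n))) := by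
        rw [e1, e2]
        simp only [tCoeff]
        have hkcp : k ≤ col (fp a) := by rw [hcolp]; omega
        have hkcq : k ≤ col (fq a) := by rw [hr]; exact hkr
        have hcp : col (⟨(fp a).1, ⟨(fp a).2.val + k, h1⟩⟩ : Idx j) = col (fp a) - k := by
          rw [hcolp, hcolp]; dsimp only; omega
        have hcq : col (⟨(fq a).1, ⟨(fq a).2.val + k, h2⟩⟩ : Idx j) = col (fq a) - k := by
          rw [hcolp, hcolp]; dsimp only; omega
        have i1 : ((col (⟨(fp a).1, ⟨(fp a).2.val + k, h1⟩⟩ : Idx j) : ℕ) : ZMod n)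
            + (a + (k : ZMod n)) = ((col (fp a) : ℕ) : ZMod n) + a := by
          rw [hcp, Nat.cast_sub hkcp]; ring
        have i2 : ((col (⟨(fq a).1, ⟨(fq a).2.val + k, h2⟩⟩ : Idx j) : ℕ) : ZMod n)
            + (a + (k : ZMod n)) = ((col (fq a) : ℕ) : ZMod n) + a := by
          rw [hcq, Nat.cast_sub hkcq]; ring
        rw [i1, i2]
        show t.1 ^ ((fp a).2.val + k) * _ = t.1 ^ ((fq a).2.val + k) * _
        rw [pow_add, pow_add]
        calc t.1 ^ (fp a).2.val * t.1 ^ k * t.2 (((col (fp a) : ℕ) : ZMod n) + a, (fp a).1)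
            = t.1 ^ k * (t.1 ^ (fp a).2.val * t.2 (((col (fp a) : ℕ) : ZMod n) + a, (fp a).1)) := by
              rw [mul_comm (t.1 ^ (fp a).2.val) (t.1 ^ k), mul_assoc]
          _ = t.1 ^ k * (t.1 ^ (fq a).2.val * t.2 (((col (fq a) : ℕ) : ZMod n) + a, (fq a).1)) := by
              rw [key]
          _ = t.1 ^ (fq a).2.val * t.1 ^ k * t.2 (((col (fq a) : ℕ) : ZMod n) + a, (fq a).1) := by
              rw [← mul_assoc, mul_comm (t.1 ^ k) (t.1 ^ (fq a).2.val)]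
      exact scale_pq_of_eq (tCoeff n t (a + (k : ZMod n))) _ _ hcoeff
end
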